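/- arXiv:cs/0504013 — 11 statements merged into one kernel-verified Lean document; each statement's English description precedes it below -/
import Mathlib

section
/- Let G be a Tanner graph and let p = (p_1,…,p_n) be a nonnegative real vector satisfying the fundamental cone inequalities of G. Then the support supp(p) = {i : p_i ≠ 0} is a stopping set of G. -/
/-- A Tanner graph with `n` variable nodes and `m` check nodes, given by the
neighborhood `N u` (the set of variable nodes adjacent to check node `u`). -/
structure TannerGraph (n m : ℕ) where
  N : Fin m → Finset (Fin n)

/-- A nonnegative vector satisfying the fundamental cone inequalities of `G`. -/
def InFundamentalCone {n m : ℕ} (G : TannerGraph n m) (p : Fin n → ℝ) : Prop :=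
  (∀ i, 0 ≤ p i) ∧
    ∀ j : Fin m, ∀ i ∈ G.N j, p i ≤ ∑ k ∈ (G.N j).erase i, p k

open Classical in
/-- The support of a real vector, as a finset. -/
noncomputable def suppF {n : ℕ} (p : Fin n → ℝ) : Finset (Fin n) :=
  Finset.univ.filter (fun i => p i ≠ 0)

/-- A stopping set: every check node adjacent to some node of `S` is adjacent to
at least two nodes of `S`. -/
def IsStoppingSet {n m : ℕ} (G : TannerGraph n m) (S : Finset (Fin n)) : Prop :=
  ∀ j : Fin m, (G.N j ∩ S).Nonempty → 2 ≤ (G.N j ∩ S).card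

theorem support_of_cone_vector_is_stopping_set {n m : ℕ} (G : TannerGraph n m)
    (p : Fin n → ℝ) (hp : InFundamentalCone G p) :
    IsStoppingSet G (suppF p) := by
  classical
  rintro j ⟨i, hi⟩
  simp only [Finset.mem_inter, suppF, Finset.mem_filter, Finset.mem_univ, true_and] at hi
  obtain ⟨hiN, hip⟩ := hi
  by_contra h
  push_neg at h
  -- card of intersection is 1 (nonempty, < 2) so i is the unique support element in N j
  have hone : ∀ k ∈ (G.N j).erase i, p k = 0 := by
    intro k hk
    rw [Finset.mem_erase] at hk
    by_contra hk0
    have h2 : ({i, k} : Finset (Fin n)) ⊆ G.N j ∩ suppF p := by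
      intro x hx
      rcases Finset.mem_insert.mp hx with rfl | hx
      · exact Finset.mem_inter.mpr ⟨hiN, by simp [suppF, hip]⟩
      · rw [Finset.mem_singleton] at hx; subst hx
        exact Finset.mem_inter.mpr ⟨hk.2, by simp [suppF, hk0]⟩
    have := Finset.card_le_card h2
    rw [Finset.card_insert_of_notMem (by simp [Ne.symm hk.1]), Finset.card_singleton] at this
    omega
  have hsum : ∑ k ∈ (G.N j).erase i, p k = 0 := Finset.sum_eq_zero hone
  have := hp.2 j i hiN
  rw [hsum] at this
  exact hip (le_antisymm this (hp.1 i))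
end

section
/- Let G be a Tanner graph with finite girth g in which every variable node has degree at least d ≥ 2, and let p be a nonzero nonnegative real vector satisfying the fundamental cone inequalities of G. If g ≡ 2 (mod 4) (i.e., g/2 is odd), then both w_BSC(p) and w_AWGN(p) are at least 1 + Σ_{i=0}^{(g−6)/4} d(d−1)^i. If g ≡ 0 (mod 4) (i.e., g/2 is even), then both w_BSC(p) and w_AWGN(p) are at least 1 + Σ_{i=0}^{(g−8)/4} d(d−1)^i + (d−1)^{(g−4)/4} (empty sums being 0). -/
/-- The underlying bipartite simple graph of a Tanner graph, on vertex set
`Fin n ⊕ Fin m` (variable nodes on the left, check nodes on the right). -/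
def TannerGraph.graph {n m : ℕ} (G : TannerGraph n m) : SimpleGraph (Fin n ⊕ Fin m) :=
  SimpleGraph.fromRel (fun a b =>
    match a, b with
    | Sum.inl i, Sum.inr j => i ∈ G.N j
    | _, _ => False)

/-- The degree of variable node `i` in the Tanner graph. -/
def TannerGraph.varDeg {n m : ℕ} (G : TannerGraph n m) (i : Fin n) : ℕ :=
  (Finset.univ.filter (fun j : Fin m => i ∈ G.N j)).card

/-- AWGN pseudocodeword weight. -/
noncomputable def wAWGN {n : ℕ} (p : Fin n → ℝ) : ℝ :=
  (∑ i, p i) ^ 2 / (∑ i, (p i) ^ 2)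

/-- The sum of the `e` largest components of `p` (for nonnegative `p`),
expressed as the largest sum over sets of `e` coordinates. -/
noncomputable def maxSum {n : ℕ} (p : Fin n → ℝ) (e : ℕ) : ℝ :=
  sSup ((fun S : Finset (Fin n) => ∑ i ∈ S, p i) '' {S | S.card = e})

/-- The smallest number `e` such that the sum of the `e` largest components of `p`
is at least half of the total sum. -/
noncomputable def eBSC {n : ℕ} (p : Fin n → ℝ) : ℕ :=
  sInf {e : ℕ | (∑ i, p i) / 2 ≤ maxSum p e}

/-- BSC pseudocodeword weight. -/
noncomputable def wBSC {n : ℕ} (p : Fin n → ℝ) : ℝ :=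
  if maxSum p (eBSC p) = (∑ i, p i) / 2 then 2 * (eBSC p : ℝ) else 2 * (eBSC p : ℝ) - 1

/-!
Let `v` be any variable node. Up to half the girth, breadth-first search from `v` (if `g ≡ 2 mod 4`)
or from a check node containing `v` (if `g ≡ 0 mod 4`) sees a tree. In it every variable node feeds
at least `d - 1` child checks, and the cone inequality at such a check says that its children carry
at least the mass of their parent. Summing over the disjoint levels of the tree gives
`B * p v ≤ ∑ i, p i`, with `B` the claimed bound. Taking `v` with `p v` maximal, the `e` largest
entries of `p` sum to at most `e * p v`, and `∑ i, p i ^ 2 ≤ p v * ∑ i, p i`, so both weights are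
at least `B`.
-/

open SimpleGraph Finset

namespace SimpleGraph

variable {V : Type*} {G : SimpleGraph V} {ρ x y y₁ y₂ : V}

lemma Walk.dist_le_length_of_mem_support (w : G.Walk ρ x) (hy : y ∈ w.support) :
    G.dist ρ y ≤ w.length := by
  classical
  exact (G.dist_le (w.takeUntil y hy)).trans (w.length_takeUntil_le_length hy)

lemma natCast_lt_egirth_of_lt_girth {k : ℕ} (h : k < G.girth) : (k : ℕ∞) < G.egirth :=
  (Nat.cast_lt.mpr h).trans_le (ENat.natCast_toNat_le_self _)

/-- Otherwise shortest paths from `ρ` to `y₁` and `y₂`, extended to `x`, would close a cycle of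
length at most `2D + 2`. -/
lemma eq_of_adj_of_dist_le_of_lt_egirth {D : ℕ} (hD : ((2 * D + 2 : ℕ) : ℕ∞) < G.egirth)
    (h₁ : G.Adj x y₁) (h₂ : G.Adj x y₂) (hr₁ : G.Reachable ρ y₁) (hr₂ : G.Reachable ρ y₂)
    (hd₁ : G.dist ρ y₁ ≤ D) (hd₂ : G.dist ρ y₂ ≤ D) (hx : D < G.dist ρ x) : y₁ = y₂ := by
  by_contra hne
  obtain ⟨P₁, hP₁, hl₁⟩ := hr₁.exists_path_of_dist
  obtain ⟨P₂, hP₂, hl₂⟩ := hr₂.exists_path_of_dist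
  have hx₁ : x ∉ P₁.support := fun h => by
    have := P₁.dist_le_length_of_mem_support h; omega
  have hx₂ : x ∉ P₂.support := fun h => by
    have := P₂.dist_le_length_of_mem_support h; omega
  have hR₁ : (Walk.cons h₁ P₁.reverse).IsPath := by simpa using ⟨hP₁, hx₁⟩
  have hR₂ : (Walk.cons h₂ P₂.reverse).IsPath := by simpa using ⟨hP₂, hx₂⟩
  have hR : Walk.cons h₁ P₁.reverse ≠ Walk.cons h₂ P₂.reverse := fun h =>
    hne (by simpa [Walk.snd_cons] using congrArg Walk.snd h)
  obtain ⟨_, -, -, c, hc, hlen⟩ := hR₁.exists_isCycle_length_le_add_of_ne hR₂ hR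
  have := hD.trans_le (egirth_le_length hc)
  simp only [Walk.length_cons, Walk.length_reverse] at hlen
  norm_cast at this
  omega

lemma Coloring.dist_ne_of_adj (c : G.Coloring Bool) (hadj : G.Adj x y) (hx : G.Reachable ρ x) :
    G.dist ρ x ≠ G.dist ρ y := by
  intro h
  obtain ⟨wx, hwx⟩ := hx.exists_walk_length_eq_dist
  obtain ⟨wy, hwy⟩ := (hx.trans hadj.reachable).exists_walk_length_eq_dist
  have hx' := c.even_length_iff_congr wx
  have hy' := c.even_length_iff_congr wy
  rw [hwx, h, ← hwy, hy'] at hx'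
  exact c.valid hadj (by cases hρ : c ρ <;> simp_all)

lemma Coloring.dist_eq_dist_add_one_of_adj_of_reachable (c : G.Coloring Bool) (hadj : G.Adj x y)
    (hx : G.Reachable ρ x) : G.dist ρ x = G.dist ρ y + 1 ∨ G.dist ρ y = G.dist ρ x + 1 := by
  have := c.dist_ne_of_adj hadj hx
  have := hadj.diff_dist_adj (u := ρ)
  omega

end SimpleGraph

lemma pow_mul_le_of_forall_mul_le_succ {a : ℝ} (ha : 0 ≤ a) {S : ℕ → ℝ} {t : ℕ}
    (h : ∀ k < t, a * S k ≤ S (k + 1)) : ∀ k ≤ t, a ^ k * S 0 ≤ S k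
  | 0, _ => by simp
  | k + 1, hk =>
    calc a ^ (k + 1) * S 0 = a * (a ^ k * S 0) := by ring
      _ ≤ a * S k :=
        mul_le_mul_of_nonneg_left (pow_mul_le_of_forall_mul_le_succ ha h k (by omega)) ha
      _ ≤ S (k + 1) := h k (by omega)

lemma one_add_sum_mul_pow_add_pow (y : ℝ) (t : ℕ) :
    1 + ∑ i ∈ range t, y * (y - 1) ^ i + (y - 1) ^ t = 2 * ∑ k ∈ range (t + 1), (y - 1) ^ k := by
  induction t with
  | zero => norm_num
  | succ s ih =>
    rw [sum_range_succ, sum_range_succ _ (s + 1)]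
    linear_combination ih

namespace TannerGraph

open Sum

variable {n m : ℕ} (G : TannerGraph n m)

@[simp] lemma graph_adj_inl_inr {i : Fin n} {j : Fin m} :
    G.graph.Adj (inl i) (inr j) ↔ i ∈ G.N j := by
  simp [TannerGraph.graph]

@[simp] lemma graph_adj_inr_inl {i : Fin n} {j : Fin m} :
    G.graph.Adj (inr j) (inl i) ↔ i ∈ G.N j := by
  simp [TannerGraph.graph]

def sideColoring : G.graph.Coloring Bool :=
  Coloring.mk Sum.isLeft fun {a b} h => by
    rcases a with _ | _ <;> rcases b with _ | _ <;> simp_all [TannerGraph.graph]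

open Classical in
/-- `dist` is `0` between unreachable vertices, hence the reachability condition. -/
noncomputable def varLevel (ρ : Fin n ⊕ Fin m) (δ : ℕ) : Finset (Fin n) :=
  {v | G.graph.Reachable ρ (inl v) ∧ G.graph.dist ρ (inl v) = δ}

open Classical in
noncomputable def checkLevel (ρ : Fin n ⊕ Fin m) (δ : ℕ) : Finset (Fin m) :=
  {u | G.graph.Reachable ρ (inr u) ∧ G.graph.dist ρ (inr u) = δ}

structure InFundamentalCone (p : Fin n → ℝ) : Prop where
  nonneg : ∀ i, 0 ≤ p i
  le_sum_erase : ∀ j, ∀ i ∈ G.N j, p i ≤ ∑ k ∈ (G.N j).erase i, p k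

variable {G} {ρ : Fin n ⊕ Fin m} {δ : ℕ} {p : Fin n → ℝ}

@[simp] lemma mem_varLevel {v : Fin n} :
    v ∈ G.varLevel ρ δ ↔ G.graph.Reachable ρ (inl v) ∧ G.graph.dist ρ (inl v) = δ := by
  simp [varLevel]

@[simp] lemma mem_checkLevel {u : Fin m} :
    u ∈ G.checkLevel ρ δ ↔ G.graph.Reachable ρ (inr u) ∧ G.graph.dist ρ (inr u) = δ := by
  simp [checkLevel]

lemma card_N_inter_varLevel_le_one {u : Fin m} (hu : u ∈ G.checkLevel ρ (δ + 1))
    (hδ : ((2 * δ + 2 : ℕ) : ℕ∞) < G.graph.egirth) : (G.N u ∩ G.varLevel ρ δ).card ≤ 1 := by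
  rw [card_le_one]
  intro a ha b hb
  simp only [mem_inter, mem_varLevel, mem_checkLevel] at ha hb hu
  exact inl_injective <| eq_of_adj_of_dist_le_of_lt_egirth hδ (x := inr u)
    (by simpa using ha.1) (by simpa using hb.1) ha.2.1 hb.2.1 ha.2.2.le hb.2.2.le (by omega)

lemma N_subset_varLevel_union {u : Fin m} (hu : u ∈ G.checkLevel ρ (δ + 1)) :
    G.N u ⊆ G.varLevel ρ δ ∪ G.varLevel ρ (δ + 2) := by
  intro x hx
  rw [mem_checkLevel] at hu
  have hadj : G.graph.Adj (inr u) (inl x) := by simpa using hx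
  have hr := hu.1.trans hadj.reachable
  rw [mem_union, mem_varLevel, mem_varLevel]
  rcases G.sideColoring.dist_eq_dist_add_one_of_adj_of_reachable hadj hu.1 with h | h
  · exact Or.inl ⟨hr, by omega⟩
  · exact Or.inr ⟨hr, by omega⟩

lemma sum_N_inter_varLevel_le (hp : G.InFundamentalCone p) {u : Fin m}
    (hu : u ∈ G.checkLevel ρ (δ + 1)) (hδ : ((2 * δ + 2 : ℕ) : ℕ∞) < G.graph.egirth) :
    ∑ v ∈ G.N u ∩ G.varLevel ρ δ, p v ≤ ∑ v ∈ G.N u ∩ G.varLevel ρ (δ + 2), p v := by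
  obtain h | ⟨w, hw⟩ := (G.N u ∩ G.varLevel ρ δ).eq_empty_or_nonempty
  · rw [h, sum_empty]
    exact sum_nonneg fun i _ => hp.nonneg i
  have hone := card_le_one.mp (card_N_inter_varLevel_le_one hu hδ)
  rw [eq_singleton_iff_unique_mem.mpr ⟨hw, fun x hx => hone x hx w hw⟩, sum_singleton]
  have hwN := (mem_inter.mp hw).1
  refine (hp.le_sum_erase u w hwN).trans
    (sum_le_sum_of_subset_of_nonneg ?_ fun i _ _ => hp.nonneg i)
  intro x hx
  obtain ⟨hxw, hxN⟩ := mem_erase.mp hx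
  rcases mem_union.mp (N_subset_varLevel_union hu hxN) with h | h
  · exact absurd (hone x (mem_inter.mpr ⟨hxN, h⟩) w hw) hxw
  · exact mem_inter.mpr ⟨hxN, h⟩

lemma pairwiseDisjoint_N_inter_varLevel (hδ : ((2 * δ + 4 : ℕ) : ℕ∞) < G.graph.egirth) :
    (G.checkLevel ρ (δ + 1) : Set (Fin m)).PairwiseDisjoint
      fun u => G.N u ∩ G.varLevel ρ (δ + 2) := by
  intro u hu u' hu' hne
  rw [Function.onFun, Finset.disjoint_left]
  intro x hx hx'
  simp only [mem_coe, mem_checkLevel, mem_inter, mem_varLevel] at hu hu' hx hx'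
  exact hne <| inr_injective <| eq_of_adj_of_dist_le_of_lt_egirth (D := δ + 1) (x := inl x) hδ
    (by simpa using hx.1) (by simpa using hx'.1) hu.1 hu'.1 hu.2.le hu'.2.le (by omega)

lemma le_card_checkLevel_filter_mem {d : ℕ} {w : Fin n} (hdeg : d ≤ G.varDeg w)
    (hw : w ∈ G.varLevel ρ δ) (hδ : ((2 * δ : ℕ) : ℕ∞) < G.graph.egirth) :
    d - min δ 1 ≤ ((G.checkLevel ρ (δ + 1)).filter (w ∈ G.N ·)).card := by
  classical
  rw [mem_varLevel] at hw
  set parents := (univ : Finset (Fin m)).filter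
    fun j => w ∈ G.N j ∧ G.graph.dist ρ (inr j) + 1 = δ
  have hsplit :
      univ.filter (w ∈ G.N ·) ⊆ parents ∪ (G.checkLevel ρ (δ + 1)).filter (w ∈ G.N ·) := by
    intro j hj
    have hwj : w ∈ G.N j := (mem_filter.mp hj).2
    have hadj : G.graph.Adj (inl w) (inr j) := by simpa using hwj
    simp only [mem_union, mem_filter, mem_univ, true_and, mem_checkLevel, parents]
    rcases G.sideColoring.dist_eq_dist_add_one_of_adj_of_reachable hadj hw.1 with h | h
    · exact Or.inl ⟨hwj, by omega⟩
    · exact Or.inr ⟨⟨hw.1.trans hadj.reachable, by omega⟩, hwj⟩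
  have hparents : parents.card ≤ min δ 1 := by
    rcases δ with _ | δ
    · simp [parents]
    rw [min_eq_right (by omega), card_le_one]
    intro a ha b hb
    simp only [mem_filter, mem_univ, true_and, parents] at ha hb
    have hadj : ∀ {j}, w ∈ G.N j → G.graph.Adj (inl w) (inr j) := by simp
    exact inr_injective <| eq_of_adj_of_dist_le_of_lt_egirth (D := δ) hδ (hadj ha.1) (hadj hb.1)
      (hw.1.trans (hadj ha.1).reachable) (hw.1.trans (hadj hb.1).reachable)
      (by omega) (by omega) (by omega)
  have := (card_le_card hsplit).trans (card_union_le _ _)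
  rw [varDeg] at hdeg
  omega

/-- Each node of level `δ` feeds all of its at least `d` checks, except its parent when `δ ≠ 0`. -/
theorem mul_sum_varLevel_le_sum_varLevel_add_two (hp : G.InFundamentalCone p) {d : ℕ}
    (hdeg : ∀ i, d ≤ G.varDeg i) (hδ : ((2 * δ + 4 : ℕ) : ℕ∞) < G.graph.egirth) :
    ((d - min δ 1 : ℕ) : ℝ) * ∑ v ∈ G.varLevel ρ δ, p v ≤ ∑ v ∈ G.varLevel ρ (δ + 2), p v := by
  classical
  have hlt : ∀ k ≤ 2 * δ + 4, ((k : ℕ) : ℕ∞) < G.graph.egirth :=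
    fun k hk => lt_of_le_of_lt (Nat.cast_le.mpr hk) hδ
  calc ((d - min δ 1 : ℕ) : ℝ) * ∑ v ∈ G.varLevel ρ δ, p v
      ≤ ∑ w ∈ G.varLevel ρ δ, ∑ _u ∈ (G.checkLevel ρ (δ + 1)).filter (w ∈ G.N ·), p w := by
        rw [mul_sum]
        refine sum_le_sum fun w hw => ?_
        rw [sum_const, nsmul_eq_mul]
        gcongr
        · exact hp.nonneg w
        · exact le_card_checkLevel_filter_mem (hdeg w) hw (hlt _ (by omega))
    _ = ∑ u ∈ G.checkLevel ρ (δ + 1), ∑ w ∈ G.N u ∩ G.varLevel ρ δ, p w :=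
        sum_comm' fun w u => by simp only [mem_filter, mem_inter]; tauto
    _ ≤ ∑ u ∈ G.checkLevel ρ (δ + 1), ∑ v ∈ G.N u ∩ G.varLevel ρ (δ + 2), p v :=
        sum_le_sum fun u hu => sum_N_inter_varLevel_le hp hu (hlt _ (by omega))
    _ = ∑ v ∈ (G.checkLevel ρ (δ + 1)).biUnion fun u => G.N u ∩ G.varLevel ρ (δ + 2), p v :=
        (sum_biUnion (pairwiseDisjoint_N_inter_varLevel hδ)).symm
    _ ≤ ∑ v ∈ G.varLevel ρ (δ + 2), p v :=
        sum_le_sum_of_subset_of_nonneg (biUnion_subset.mpr fun _ _ => inter_subset_right)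
          fun i _ _ => hp.nonneg i

lemma sum_sum_varLevel_le (hp0 : ∀ i, 0 ≤ p i) {f : ℕ → ℕ} (hf : f.Injective) (s : Finset ℕ) :
    ∑ k ∈ s, ∑ v ∈ G.varLevel ρ (f k), p v ≤ ∑ i, p i := by
  classical
  have hdisj : (s : Set ℕ).PairwiseDisjoint fun k => G.varLevel ρ (f k) := by
    intro a _ b _ hab
    rw [Function.onFun, Finset.disjoint_left]
    intro v ha hb
    rw [mem_varLevel] at ha hb
    exact hab (hf (ha.2.symm.trans hb.2))
  rw [← sum_biUnion hdisj]
  exact sum_le_sum_of_subset_of_nonneg (subset_univ _) fun i _ _ => hp0 i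

lemma varLevel_inl_zero (v : Fin n) : G.varLevel (inl v) 0 = {v} := by
  ext w
  rw [mem_varLevel, mem_singleton, dist_eq_zero_iff_eq_or_not_reachable]
  constructor
  · rintro ⟨hr, h | h⟩
    · exact (inl_injective h).symm
    · exact absurd hr h
  · rintro rfl
    exact ⟨Reachable.refl _, Or.inl rfl⟩

lemma N_subset_varLevel_inr_one (u : Fin m) : G.N u ⊆ G.varLevel (inr u) 1 := by
  intro v hv
  have hadj : G.graph.Adj (inr u) (inl v) := by simpa using hv
  exact mem_varLevel.mpr ⟨hadj.reachable, dist_eq_one_iff_adj.mpr hadj⟩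

variable {d : ℕ}

lemma cast_sub_min_one (hd : 1 ≤ d) {δ : ℕ} (hδ : 1 ≤ δ) : ((d - min δ 1 : ℕ) : ℝ) = d - 1 := by
  rw [min_eq_right hδ, Nat.cast_sub hd, Nat.cast_one]

/-- Breadth-first search rooted at `v`. -/
theorem mul_le_sum_of_four_mul_lt_egirth (hp : G.InFundamentalCone p) (hd : 1 ≤ d)
    (hdeg : ∀ i, d ≤ G.varDeg i) {t : ℕ} (ht : ((4 * t : ℕ) : ℕ∞) < G.graph.egirth) (v : Fin n) :
    (1 + ∑ i ∈ range t, (d : ℝ) * ((d : ℝ) - 1) ^ i) * p v ≤ ∑ i, p i := by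
  set S : ℕ → ℝ := fun k => ∑ w ∈ G.varLevel (inl v) (2 * k), p w
  have hS0 : S 0 = p v := by simp [S, varLevel_inl_zero]
  have hstep : ∀ k < t, ((d - min (2 * k) 1 : ℕ) : ℝ) * S k ≤ S (k + 1) := fun k hk =>
    mul_sum_varLevel_le_sum_varLevel_add_two hp hdeg
      (lt_of_le_of_lt (Nat.cast_le.mpr (by omega)) ht)
  have hd' : (0 : ℝ) ≤ d - 1 := by simpa using hd
  have hgrowth : ∀ k < t, ((d : ℝ) - 1) ^ k * ((d : ℝ) * p v) ≤ S (k + 1) := by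
    intro k hk
    have hS1 : (d : ℝ) * p v ≤ S 1 := by simpa [hS0] using hstep 0 (by omega)
    refine (mul_le_mul_of_nonneg_left hS1 (pow_nonneg hd' k)).trans ?_
    refine pow_mul_le_of_forall_mul_le_succ (S := fun k => S (k + 1)) hd' (fun j hj => ?_) k le_rfl
    have h := hstep (j + 1) (by omega)
    rwa [cast_sub_min_one hd (by omega)] at h
  calc (1 + ∑ i ∈ range t, (d : ℝ) * ((d : ℝ) - 1) ^ i) * p v
      = S 0 + ∑ i ∈ range t, ((d : ℝ) - 1) ^ i * ((d : ℝ) * p v) := by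
        rw [hS0, add_mul, one_mul, sum_mul]
        congr 1
        exact sum_congr rfl fun i _ => by ring
    _ ≤ S 0 + ∑ i ∈ range t, S (i + 1) := by
        gcongr with i hi
        exact hgrowth i (mem_range.mp hi)
    _ = ∑ k ∈ range (t + 1), S k := by rw [sum_range_succ', add_comm]
    _ ≤ ∑ i, p i := G.sum_sum_varLevel_le hp.nonneg (fun a b h => by omega) _

/-- Breadth-first search rooted at a check node containing `v`. -/
theorem mul_le_sum_of_four_mul_add_two_lt_egirth
    (hp : G.InFundamentalCone p) (hd : 1 ≤ d) (hdeg : ∀ i, d ≤ G.varDeg i) {t : ℕ}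
    (ht : ((4 * t + 2 : ℕ) : ℕ∞) < G.graph.egirth) (v : Fin n) :
    (1 + ∑ i ∈ range t, (d : ℝ) * ((d : ℝ) - 1) ^ i + ((d : ℝ) - 1) ^ t) * p v ≤ ∑ i, p i := by
  classical
  obtain ⟨u, hu⟩ : ∃ u, v ∈ G.N u := by
    obtain ⟨u, hu⟩ := card_pos.mp (hd.trans (hdeg v))
    exact ⟨u, (mem_filter.mp hu).2⟩
  set S : ℕ → ℝ := fun k => ∑ w ∈ G.varLevel (inr u) (2 * k + 1), p w
  have hS0 : 2 * p v ≤ S 0 :=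
    calc 2 * p v ≤ ∑ w ∈ G.N u, p w := by
          rw [← add_sum_erase _ _ hu]
          linarith [hp.le_sum_erase u v hu]
      _ ≤ S 0 :=
          sum_le_sum_of_subset_of_nonneg (N_subset_varLevel_inr_one u) fun i _ _ => hp.nonneg i
  have hd' : (0 : ℝ) ≤ d - 1 := by simpa using hd
  have hgrowth : ∀ k ≤ t, ((d : ℝ) - 1) ^ k * S 0 ≤ S k :=
    pow_mul_le_of_forall_mul_le_succ hd' fun k hk => by
      have h := mul_sum_varLevel_le_sum_varLevel_add_two hp hdeg (ρ := inr u) (δ := 2 * k + 1)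
        (lt_of_le_of_lt (Nat.cast_le.mpr (by omega)) ht)
      rwa [cast_sub_min_one hd (by omega)] at h
  calc (1 + ∑ i ∈ range t, (d : ℝ) * ((d : ℝ) - 1) ^ i + ((d : ℝ) - 1) ^ t) * p v
      = ∑ k ∈ range (t + 1), ((d : ℝ) - 1) ^ k * (2 * p v) := by
        rw [one_add_sum_mul_pow_add_pow, mul_comm 2, mul_assoc, sum_mul]
    _ ≤ ∑ k ∈ range (t + 1), S k := sum_le_sum fun k hk =>
        (mul_le_mul_of_nonneg_left hS0 (pow_nonneg hd' _)).trans
          (hgrowth k (Nat.lt_succ_iff.mp (mem_range.mp hk)))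
    _ ≤ ∑ i, p i := G.sum_sum_varLevel_le hp.nonneg (fun a b h => by omega) _

end TannerGraph

section Weights

variable {n : ℕ} {p : Fin n → ℝ}

lemma le_wAWGN (hp0 : ∀ i, 0 ≤ p i) (hpne : p ≠ 0) {B : ℝ} (hB : ∀ i, B * p i ≤ ∑ j, p j) :
    B ≤ wAWGN p := by
  obtain ⟨i, hi⟩ := Function.ne_iff.mp hpne
  have hsq : 0 < ∑ j, p j ^ 2 :=
    sum_pos' (fun j _ => sq_nonneg _) ⟨i, mem_univ i, pow_pos (lt_of_le_of_ne (hp0 i) hi.symm) 2⟩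
  rw [wAWGN, le_div_iff₀ hsq, sq (∑ j, p j), mul_sum, mul_sum]
  refine sum_le_sum fun j _ => ?_
  rw [sq, ← mul_assoc]
  exact mul_le_mul_of_nonneg_right (hB j) (hp0 j)

lemma sum_le_maxSum (S : Finset (Fin n)) : ∑ i ∈ S, p i ≤ maxSum p S.card :=
  le_csSup (Set.toFinite _).bddAbove ⟨S, rfl, rfl⟩

lemma maxSum_le_mul {c : ℝ} (hc : 0 ≤ c) (hpc : ∀ i, p i ≤ c) (e : ℕ) : maxSum p e ≤ e * c := by
  refine Real.sSup_le ?_ (by positivity)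
  rintro _ ⟨S, hS, rfl⟩
  calc ∑ i ∈ S, p i ≤ ∑ _i ∈ S, c := sum_le_sum fun i _ => hpc i
    _ = e * c := by rw [sum_const, nsmul_eq_mul, hS]

lemma le_wBSC (hp0 : ∀ i, 0 ≤ p i) (hpne : p ≠ 0) {B : ℕ} (hB : ∀ i, B * p i ≤ ∑ j, p j) :
    (B : ℝ) ≤ wBSC p := by
  obtain ⟨i, hi⟩ := Function.ne_iff.mp hpne
  have : Nonempty (Fin n) := ⟨i⟩
  obtain ⟨v, hv⟩ := Finite.exists_max p
  have hpv : 0 < p v := (lt_of_le_of_ne (hp0 i) (Ne.symm hi)).trans_le (hv i)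
  have hsum : 0 ≤ ∑ j, p j := sum_nonneg fun j _ => hp0 j
  have hn : n ∈ {e : ℕ | (∑ j, p j) / 2 ≤ maxSum p e} := by
    have := sum_le_maxSum (p := p) univ
    rw [card_univ, Fintype.card_fin] at this
    exact (half_le_self hsum).trans this
  have he : (∑ j, p j) / 2 ≤ maxSum p (eBSC p) := Nat.sInf_mem ⟨n, hn⟩
  have hmax := maxSum_le_mul hpv.le hv (eBSC p)
  have hBv := hB v
  rw [wBSC]
  split_ifs with h
  · exact le_of_mul_le_mul_right (by linarith : (B : ℝ) * p v ≤ 2 * eBSC p * p v) hpv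
  · have hlt : (B : ℝ) * p v < 2 * eBSC p * p v := by
      linarith [lt_of_le_of_ne he (Ne.symm h)]
    have : B < 2 * eBSC p := by exact_mod_cast lt_of_mul_lt_mul_right hlt hpv.le
    have : (B : ℝ) + 1 ≤ 2 * eBSC p := by exact_mod_cast this
    linarith

end Weights

theorem tree_bound_basic {n m : ℕ} (G : TannerGraph n m) (g d : ℕ)
    (hd : 2 ≤ d) (hdeg : ∀ i : Fin n, d ≤ G.varDeg i)
    (hgirth : G.graph.girth = (g : ℕ∞))
    (p : Fin n → ℝ) (hp0 : ∀ i, 0 ≤ p i) (hpne : p ≠ 0)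
    (hcone : ∀ j : Fin m, ∀ i ∈ G.N j, p i ≤ ∑ k ∈ (G.N j).erase i, p k) :
    (g % 4 = 2 →
      1 + ∑ i ∈ Finset.range ((g - 2) / 4), (d : ℝ) * ((d : ℝ) - 1) ^ i ≤ wBSC p ∧
      1 + ∑ i ∈ Finset.range ((g - 2) / 4), (d : ℝ) * ((d : ℝ) - 1) ^ i ≤ wAWGN p) ∧
    (g % 4 = 0 →
      1 + (∑ i ∈ Finset.range ((g - 4) / 4), (d : ℝ) * ((d : ℝ) - 1) ^ i)
          + ((d : ℝ) - 1) ^ ((g - 4) / 4) ≤ wBSC p ∧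
      1 + (∑ i ∈ Finset.range ((g - 4) / 4), (d : ℝ) * ((d : ℝ) - 1) ^ i)
          + ((d : ℝ) - 1) ^ ((g - 4) / 4) ≤ wAWGN p) := by
  have hp : G.InFundamentalCone p := ⟨hp0, hcone⟩
  have hd1 : 1 ≤ d := by omega
  have hweights : ∀ (B : ℕ) (b : ℝ), (B : ℝ) = b → (∀ i, b * p i ≤ ∑ j, p j) →
      b ≤ wBSC p ∧ b ≤ wAWGN p := by
    rintro B _ rfl hB
    exact ⟨le_wBSC hp0 hpne hB, le_wAWGN hp0 hpne hB⟩
  -- `g = 0` when `G.graph` is acyclic.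
  have hegirth : ∀ k, k < g ∨ k < 3 → (k : ℕ∞) < G.graph.egirth := by
    rintro k (hk | hk)
    · exact natCast_lt_egirth_of_lt_girth (by exact_mod_cast hgirth ▸ (Nat.cast_lt.mpr hk))
    · exact lt_of_lt_of_le (by exact_mod_cast hk) G.graph.three_le_egirth
  refine ⟨fun hg => ?_, fun hg => ?_⟩
  · refine hweights (1 + ∑ i ∈ range ((g - 2) / 4), d * (d - 1) ^ i) _
      (by push_cast [Nat.cast_sub hd1]; rfl) fun v => ?_
    exact TannerGraph.mul_le_sum_of_four_mul_lt_egirth hp hd1 hdeg (hegirth _ (by omega)) v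
  · refine hweights (1 + ∑ i ∈ range ((g - 4) / 4), d * (d - 1) ^ i + (d - 1) ^ ((g - 4) / 4)) _
      (by push_cast [Nat.cast_sub hd1]; rfl) fun v => ?_
    exact TannerGraph.mul_le_sum_of_four_mul_add_two_lt_egirth hp hd1 hdeg (hegirth _ (by omega)) v
end

section
/- Let G be a Tanner graph such that between every pair of variable nodes of G there is a path in G all of whose check nodes have degree two in G. Then every nonnegative real vector p satisfying the fundamental cone inequalities of G is a constant vector, i.e., p = k·(1,1,…,1) for some k ≥ 0. -/
/-- Two distinct variable nodes are linked if they are both adjacent to a common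
check node of degree two.  A path in `G` all of whose check nodes have degree two
is then exactly a chain of linked variable nodes. -/
def TannerGraph.Linked {n m : ℕ} (G : TannerGraph n m) (a b : Fin n) : Prop :=
  ∃ j : Fin m, (G.N j).card = 2 ∧ a ∈ G.N j ∧ b ∈ G.N j ∧ a ≠ b

lemma linked_eq {n m : ℕ} (G : TannerGraph n m) (p : Fin n → ℝ)
    (hp : InFundamentalCone G p) {a b : Fin n} (h : G.Linked a b) : p a = p b := by
  obtain ⟨j, hcard, ha, hb, hab⟩ := h
  have hset : G.N j = {a, b} :=
    (Finset.eq_of_subset_of_card_le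
      (by simp [Finset.insert_subset_iff, ha, hb])
      (by rw [hcard, Finset.card_insert_of_notMem (by simp [hab]), Finset.card_singleton])).symm
  have h1 := hp.2 j a ha
  have h2 := hp.2 j b hb
  rw [hset] at h1 h2
  rw [Finset.pair_comm] at h2
  rw [Finset.erase_insert (by simp [hab])] at h1
  rw [Finset.erase_insert (by simp [hab.symm])] at h2
  simp at h1 h2
  linarith

lemma chain_eq {n m : ℕ} (G : TannerGraph n m) (p : Fin n → ℝ)
    (hp : InFundamentalCone G p) {a b : Fin n}
    (h : Relation.ReflTransGen G.Linked a b) : p a = p b := by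
  induction h with
  | refl => rfl
  | tail _ h ih => rw [ih, linked_eq G p hp h]

theorem cone_vector_constant_of_deg_two_paths {n m : ℕ} (G : TannerGraph n m)
    (hpath : ∀ a b : Fin n, Relation.ReflTransGen G.Linked a b)
    (p : Fin n → ℝ) (hp : InFundamentalCone G p) :
    ∃ k : ℝ, 0 ≤ k ∧ ∀ i, p i = k := by
  rcases n with _ | n
  · exact ⟨0, le_refl 0, fun i => i.elim0⟩
  · refine ⟨p 0, hp.1 0, fun i => ?_⟩
    exact chain_eq G p hp (hpath i 0)
end

section
/- For every Tanner graph G there exists a finite natural number t such that every irreducible pseudocodeword p = (p_1,…,p_n) of G satisfies p_i ≤ t for all i. Equivalently, every pseudocodeword of G having a component larger than t can be written as a sum of two nonzero pseudocodewords of G. -/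
/-- A (lift-realizable) pseudocodeword of `G`: a nonnegative integer vector such
that at every check node `u` it is a nonnegative integer combination of the
even-cardinality subsets of `N(u)` (local codewords of the parity check). -/
def IsPseudocodeword {n m : ℕ} (G : TannerGraph n m) (p : Fin n → ℕ) : Prop :=
  ∀ j : Fin m, ∃ x : Finset (Fin n) → ℕ,
    ∀ i ∈ G.N j,
      p i = ∑ S ∈ (G.N j).powerset.filter (fun S => Even S.card ∧ i ∈ S), x S

/-- An irreducible pseudocodeword: nonzero and not a sum of two nonzero
pseudocodewords. -/
def IsIrreduciblePcw {n m : ℕ} (G : TannerGraph n m) (p : Fin n → ℕ) : Prop :=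
  p ≠ 0 ∧ ¬ ∃ q r : Fin n → ℕ,
    IsPseudocodeword G q ∧ IsPseudocodeword G r ∧ q ≠ 0 ∧ r ≠ 0 ∧ p = q + r

/-!
Record a pseudocodeword together with its local witnesses `x` as one vector over the variable
nodes and the pairs (check node, subset). These vectors are the solutions in natural numbers of
a homogeneous linear system, so they form a subtractive submonoid, which is finitely generated
by Dickson's lemma. Its projection to the variable coordinates, the monoid of pseudocodewords,
is then finitely generated too, and an irreducible element of a finitely generated monoid is
one of the generators. The finitely many generators bound every irreducible pseudocodeword.
-/

open Finset

theorem AddSubmonoid.mem_of_closure_eq_of_irreducible {M : Type*} [AddMonoid M]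
    {P : AddSubmonoid M} {s : Set M} (hs : closure s = P) {p : M} (hp : p ∈ P) (hp0 : p ≠ 0)
    (hirr : ¬ ∃ q r, q ∈ P ∧ r ∈ P ∧ q ≠ 0 ∧ r ≠ 0 ∧ p = q + r) : p ∈ s := by
  subst hs
  induction hp using closure_induction with
  | mem x hx => exact hx
  | zero => exact absurd rfl hp0
  | add x y hx hy ihx ihy =>
    by_cases hx0 : x = 0
    · subst hx0
      simp only [zero_add] at hp0 hirr ⊢
      exact ihy hp0 hirr
    by_cases hy0 : y = 0
    · subst hy0
      simp only [add_zero] at hp0 hirr ⊢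
      exact ihx hp0 hirr
    exact absurd ⟨x, y, hx, hy, hx0, hy0, rfl⟩ hirr

namespace TannerGraph

variable {n m : ℕ} (G : TannerGraph n m)

/-- The coordinate `Sum.inr (j, S)` carries the witness `x S` at the check node `j`. -/
def pcwWithWitnesses : AddSubmonoid (Fin n ⊕ (Fin m × Finset (Fin n)) → ℕ) where
  carrier := {w | ∀ j, ∀ i ∈ G.N j,
    w (.inl i) = ∑ S ∈ (G.N j).powerset.filter (fun S => Even S.card ∧ i ∈ S), w (.inr (j, S))}
  add_mem' {v w} hv hw j i hi := by
    simp only [Pi.add_apply, sum_add_distrib, hv j i hi, hw j i hi]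
  zero_mem' := by simp

theorem pcwWithWitnesses_subtractive {v w : Fin n ⊕ (Fin m × Finset (Fin n)) → ℕ}
    (hv : v ∈ G.pcwWithWitnesses) (hvw : v + w ∈ G.pcwWithWitnesses) :
    w ∈ G.pcwWithWitnesses := by
  intro j i hi
  have h := hvw j i hi
  simp only [Pi.add_apply, sum_add_distrib, hv j i hi] at h
  exact add_left_cancel h

def pseudocodewords : AddSubmonoid (Fin n → ℕ) :=
  G.pcwWithWitnesses.map (LinearMap.funLeft ℕ ℕ Sum.inl).toAddMonoidHom

theorem mem_pseudocodewords {p : Fin n → ℕ} :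
    p ∈ G.pseudocodewords ↔ IsPseudocodeword G p := by
  constructor
  · rintro ⟨w, hw, rfl⟩ j
    exact ⟨fun S => w (.inr (j, S)), hw j⟩
  · intro hp
    choose x hx using hp
    exact ⟨Sum.elim p fun q => x q.1 q.2, fun j i hi => by simpa using hx j i hi, rfl⟩

theorem pseudocodewords_fg : G.pseudocodewords.FG :=
  (AddSubmonoid.fg_of_subtractive fun _ hv _ hvw =>
    G.pcwWithWitnesses_subtractive hv hvw).map _

end TannerGraph

theorem exists_finite_t_value {n m : ℕ} (G : TannerGraph n m) :
    ∃ t : ℕ, ∀ p : Fin n → ℕ, IsPseudocodeword G p → IsIrreduciblePcw G p →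
      ∀ i, p i ≤ t := by
  obtain ⟨s, hs⟩ := G.pseudocodewords_fg
  refine ⟨univ.sup (s.sup id), fun p hp hirr i => ?_⟩
  have hps : p ∈ s := by
    refine AddSubmonoid.mem_of_closure_eq_of_irreducible hs (G.mem_pseudocodewords.2 hp)
      hirr.1 ?_
    simpa only [G.mem_pseudocodewords] using hirr.2
  calc p i ≤ s.sup id i := le_sup (f := id) hps i
    _ ≤ univ.sup (s.sup id) := le_sup (mem_univ i)
end

section
/- Let t ≥ 1 be an integer and let p = (p_1,…,p_n) ∈ Z_{≥0}^n be a nonzero vector with p_i ≤ t for all i. Then w_AWGN(p) ≥ (2t^2 / ((1+t^2)(t−1) + 2t)) · |supp(p)|. -/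
theorem wAWGN_lower_bound_of_bounded_components {n : ℕ} (t : ℕ) (ht : 1 ≤ t)
    (p : Fin n → ℕ) (hpne : p ≠ 0) (hpt : ∀ i, p i ≤ t) :
    (2 * (t : ℝ) ^ 2 / ((1 + (t : ℝ) ^ 2) * ((t : ℝ) - 1) + 2 * (t : ℝ))) *
        ((Finset.univ.filter (fun i => p i ≠ 0)).card : ℝ) ≤
      wAWGN (fun i => (p i : ℝ)) := by
  classical
  set T : ℝ := (t : ℝ) with hTdef
  have hT1 : (1:ℝ) ≤ T := by rw [hTdef]; exact_mod_cast ht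
  set s : ℝ := ((Finset.univ.filter (fun i => p i ≠ 0)).card : ℝ) with hsdef
  have hs0 : 0 ≤ s := by positivity
  set P : ℝ := ∑ i, ((p i : ℝ)) with hPdef
  set Q : ℝ := ∑ i, ((p i : ℝ))^2 with hQdef
  -- Q > 0
  have hQpos : 0 < Q := by
    obtain ⟨j, hj⟩ : ∃ j, p j ≠ 0 := by
      by_contra h
      push_neg at h
      exact hpne (funext fun i => h i)
    have hj1 : (1:ℝ) ≤ (p j : ℝ) := by exact_mod_cast Nat.one_le_iff_ne_zero.mpr hj
    have : (0:ℝ) < ((p j : ℝ))^2 := by nlinarith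
    exact lt_of_lt_of_le this
      (Finset.single_le_sum (f := fun i => ((p i : ℝ))^2)
        (fun i _ => sq_nonneg _) (Finset.mem_univ j))
  -- pointwise key inequality summed
  have hkey : Q + T * s ≤ (T + 1) * P := by
    have hpt' : ∀ i, ((p i : ℝ)) ≤ T := fun i => by rw [hTdef]; exact_mod_cast hpt i
    have key : ∀ i : Fin n,
        ((p i:ℝ))^2 + T * (if p i ≠ 0 then (1:ℝ) else 0) ≤ (T + 1) * (p i) := by
      intro i
      by_cases h : p i = 0
      · simp [h]
      · have h1 : (1:ℝ) ≤ (p i:ℝ) := by exact_mod_cast Nat.one_le_iff_ne_zero.mpr h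
        simp only [h, if_pos, ne_eq, not_false_eq_true, mul_one]
        nlinarith [hpt' i]
    have hsum := Finset.sum_le_sum (fun i (_ : i ∈ Finset.univ) => key i)
    have hfilt : ∑ i : Fin n, (if p i ≠ 0 then (1:ℝ) else 0) = s := by
      rw [hsdef, Finset.sum_boole]
    calc Q + T * s = ∑ i, (((p i:ℝ))^2 + T * (if p i ≠ 0 then (1:ℝ) else 0)) := by
          rw [Finset.sum_add_distrib, ← Finset.mul_sum, hfilt]
      _ ≤ ∑ i, (T + 1) * (p i : ℝ) := hsum
      _ = (T + 1) * P := by rw [← Finset.mul_sum]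
  -- constant bound: c ≤ 4T/(T+1)^2, via c*(T+1)^2 ≤ 4T
  set D : ℝ := (1 + T^2) * (T - 1) + 2 * T with hDdef
  have hDpos : 0 < D := by nlinarith [sq_nonneg T, sq_nonneg (T - 1)]
  set c : ℝ := 2 * T^2 / D with hcdef
  have hc0 : 0 ≤ c := by positivity
  have hcbound : c * (T + 1)^2 ≤ 4 * T := by
    rw [hcdef, div_mul_eq_mul_div, div_le_iff₀ hDpos]
    -- 2T^2 (T+1)^2 ≤ 4T D  ⟺ 0 ≤ 2T(T-1)^2(T-2), use t = 1 or t ≥ 2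
    rcases eq_or_lt_of_le ht with h1 | h2
    · have : T = 1 := by rw [hTdef, ← h1]; norm_num
      rw [hDdef, this]; norm_num
    · have hT2 : (2:ℝ) ≤ T := by rw [hTdef]; exact_mod_cast h2
      nlinarith [sq_nonneg (T - 1), mul_nonneg (mul_nonneg (le_of_lt (lt_of_lt_of_le one_pos hT1)) (sq_nonneg (T-1))) (sub_nonneg.mpr hT2)]
  -- main chain
  have hmain : c * s * Q ≤ P ^ 2 := by
    have hR : Q ≤ (T + 1) * P - T * s := by linarith
    have hRpos : 0 < (T + 1) * P - T * s := lt_of_lt_of_le hQpos hR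
    have hAM : 4 * T * s * ((T + 1) * P - T * s) ≤ (T + 1)^2 * P^2 := by
      nlinarith [sq_nonneg ((T + 1) * P - 2 * T * s)]
    have hTpos : (0:ℝ) < T := lt_of_lt_of_le one_pos hT1
    have h1 : c * s * Q ≤ c * s * ((T + 1) * P - T * s) :=
      mul_le_mul_of_nonneg_left hR (mul_nonneg hc0 hs0)
    have h2 : c * s * ((T + 1) * P - T * s) * (T + 1)^2 ≤ 4 * T * s * ((T + 1) * P - T * s) := by
      have := mul_le_mul_of_nonneg_right hcbound (mul_nonneg hs0 hRpos.le)
      nlinarith [this]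
    have hT1sq : (0:ℝ) < (T + 1)^2 := by positivity
    nlinarith [h1, h2, hAM]
  have hw : wAWGN (fun i => (p i : ℝ)) = P ^ 2 / Q := rfl
  rw [hw, le_div_iff₀ hQpos]
  exact hmain
end

section
/- Let t ≥ 1 be an integer and let p = (p_1,…,p_n) ∈ Z_{≥0}^n be a nonzero vector with p_i ≤ t for all i. Then w_BSC(p) ≥ |supp(p)| / t. -/
lemma maxSum_spec {n : ℕ} (p : Fin n → ℝ) (e : ℕ) (he : e ≤ n) :
    ∃ S : Finset (Fin n), S.card = e ∧ maxSum p e = ∑ i ∈ S, p i := by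
  have hne : ({S : Finset (Fin n) | S.card = e}).Nonempty := by
    obtain ⟨S, -, hcard⟩ := Finset.exists_subset_card_eq (s := (Finset.univ : Finset (Fin n)))
      (n := e) (by simpa using he)
    exact ⟨S, hcard⟩
  have hfin : (((fun S : Finset (Fin n) => ∑ i ∈ S, p i) '' {S | S.card = e})).Finite :=
    (Set.toFinite _).image _
  have hmem := (hne.image _).csSup_mem hfin
  obtain ⟨S, hS, hsum⟩ := hmem
  exact ⟨S, hS, hsum.symm⟩

lemma le_maxSum {n : ℕ} (p : Fin n → ℝ) (e : ℕ) (S : Finset (Fin n)) (hS : S.card = e) :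
    ∑ i ∈ S, p i ≤ maxSum p e :=
  le_csSup ((Set.toFinite _).image _).bddAbove ⟨S, hS, rfl⟩

lemma aux_et (a b : ℕ) (ha : 1 ≤ a) (hb : 1 ≤ b) : a + b ≤ a * b + 1 := by
  nlinarith

theorem wBSC_lower_bound_of_bounded_components {n : ℕ} (t : ℕ) (ht : 1 ≤ t)
    (p : Fin n → ℕ) (hpne : p ≠ 0) (hpt : ∀ i, p i ≤ t) :
    ((Finset.univ.filter (fun i => p i ≠ 0)).card : ℝ) / (t : ℝ) ≤
      wBSC (fun i => (p i : ℝ)) := by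
  set q : Fin n → ℝ := fun i => (p i : ℝ) with hq
  have hTpos : 0 < ∑ i, p i := by
    rcases Function.ne_iff.mp hpne with ⟨i, hi⟩
    exact Finset.sum_pos' (fun _ _ => Nat.zero_le _)
      ⟨i, Finset.mem_univ i, Nat.pos_of_ne_zero hi⟩
  have hT : ∑ i, q i = ((∑ i, p i : ℕ) : ℝ) := by push_cast; rfl
  have hmemn : n ∈ {e : ℕ | (∑ i, q i) / 2 ≤ maxSum q e} := by
    have h1 : ∑ i, q i ≤ maxSum q n := le_maxSum q n Finset.univ (by simp)
    have h0 : 0 ≤ ∑ i, q i := by rw [hT]; positivity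
    simp only [Set.mem_setOf_eq]
    linarith
  have heS : eBSC q ∈ {e : ℕ | (∑ i, q i) / 2 ≤ maxSum q e} := Nat.sInf_mem ⟨n, hmemn⟩
  have hele : eBSC q ≤ n := Nat.sInf_le hmemn
  set e := eBSC q with hedef
  obtain ⟨S, hScard, hSmax⟩ := maxSum_spec q e hele
  set H := ∑ i ∈ S, p i with hH
  set L := ∑ i ∈ Sᶜ, p i with hL
  have hHL : H + L = ∑ i, p i := Finset.sum_add_sum_compl S p
  have hHLr : (H : ℝ) + (L : ℝ) = ((∑ i, p i : ℕ) : ℝ) := by exact_mod_cast hHL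
  have hHreal : (∑ i ∈ S, q i) = (H : ℝ) := by rw [hH]; push_cast; rfl
  have hHle : H ≤ e * t := by
    calc H ≤ ∑ _i ∈ S, t := Finset.sum_le_sum (fun i _ => hpt i)
    _ = e * t := by rw [Finset.sum_const, hScard, smul_eq_mul]
  have heSH : ((∑ i, p i : ℕ) : ℝ) / 2 ≤ (H : ℝ) := by
    rw [← hT, ← hHreal, ← hSmax]; exact heS
  have hTr : (0:ℝ) < ((∑ i, p i : ℕ) : ℝ) := by exact_mod_cast hTpos
  have he1 : 1 ≤ e := by
    by_contra h
    push_neg at h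
    have he0 : e = 0 := by omega
    have : H = 0 := by
      have := hHle
      rw [he0] at this
      omega
    rw [this] at heSH
    simp at heSH
    linarith
  set s := (Finset.univ.filter (fun i => p i ≠ 0)).card with hs
  have hsupp : s ≤ e + L := by
    have hsplit : (Finset.univ.filter (fun i => p i ≠ 0)) =
        ((Finset.univ.filter (fun i => p i ≠ 0)) ∩ S) ∪
        ((Finset.univ.filter (fun i => p i ≠ 0)) ∩ Sᶜ) := by
      rw [← Finset.inter_union_distrib_left, Finset.union_compl, Finset.inter_univ]
    have h1 : ((Finset.univ.filter (fun i => p i ≠ 0)) ∩ S).card ≤ e := by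
      rw [← hScard]
      exact Finset.card_le_card Finset.inter_subset_right
    have h2 : ((Finset.univ.filter (fun i => p i ≠ 0)) ∩ Sᶜ).card ≤ L := by
      have hle : ((Finset.univ.filter (fun i => p i ≠ 0)) ∩ Sᶜ).card
          ≤ ∑ i ∈ (Finset.univ.filter (fun i => p i ≠ 0)) ∩ Sᶜ, p i := by
        have := Finset.card_nsmul_le_sum ((Finset.univ.filter (fun i => p i ≠ 0)) ∩ Sᶜ) p 1
          (fun i hi => by
            simp only [Finset.mem_inter, Finset.mem_filter] at hi
            exact Nat.one_le_iff_ne_zero.mpr hi.1.2)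
        simpa using this
      exact hle.trans (Finset.sum_le_sum_of_subset Finset.inter_subset_right)
    calc s = (((Finset.univ.filter (fun i => p i ≠ 0)) ∩ S) ∪
        ((Finset.univ.filter (fun i => p i ≠ 0)) ∩ Sᶜ)).card := by rw [hs, ← hsplit]
    _ ≤ ((Finset.univ.filter (fun i => p i ≠ 0)) ∩ S).card +
        ((Finset.univ.filter (fun i => p i ≠ 0)) ∩ Sᶜ).card := Finset.card_union_le _ _
    _ ≤ e + L := Nat.add_le_add h1 h2
  have htpos : (0:ℝ) < (t : ℝ) := by exact_mod_cast ht
  rw [div_le_iff₀ htpos]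
  unfold wBSC
  rw [← hedef]
  by_cases hcase : maxSum q e = (∑ i, q i) / 2
  · rw [if_pos hcase]
    have hHeq : (H : ℝ) = ((∑ i, p i : ℕ) : ℝ) / 2 := by
      rw [← hT, ← hHreal, ← hSmax]; exact hcase
    have h2H : 2 * H = ∑ i, p i := by
      have : (2 * (H:ℝ)) = ((∑ i, p i : ℕ) : ℝ) := by linarith
      exact_mod_cast this
    have hLH : L = H := by omega
    have hkey : s ≤ 2 * (e * t) := by
      calc s ≤ e + L := hsupp
      _ = e + H := by rw [hLH]
      _ ≤ e * t + e * t := Nat.add_le_add (Nat.le_mul_of_pos_right e ht) hHle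
      _ = 2 * (e * t) := by ring
    have hkr : (s : ℝ) ≤ 2 * ((e:ℝ) * t) := by exact_mod_cast hkey
    push_cast at hkr ⊢
    nlinarith
  · rw [if_neg hcase]
    have hstrict : ((∑ i, p i : ℕ) : ℝ) / 2 < (H : ℝ) := by
      rcases lt_or_eq_of_le heSH with h | h
      · exact h
      · exfalso; exact hcase (by rw [hSmax, hHreal, hT, h])
    have hLH : L + 1 ≤ H := by
      have hr : (L : ℝ) < (H : ℝ) := by linarith
      exact_mod_cast Nat.succ_le_of_lt (by exact_mod_cast hr)
    have het := aux_et e t he1 ht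
    have hfin : s + t ≤ 2 * (e * t) := by
      have h1 : s ≤ e + L := hsupp
      have h2 : H ≤ e * t := hHle
      omega
    have hkr : (s : ℝ) + t ≤ 2 * ((e:ℝ) * t) := by exact_mod_cast hfin
    push_cast at hkr ⊢
    nlinarith
end

section
/- Let G be a Tanner graph whose code C(G) contains a nonzero codeword, and let d_min be the minimum Hamming weight of a nonzero codeword of C(G). If p ∈ R_{≥0}^n is a nonzero good pseudocodeword, then w_maxfrac(p) ≥ d_min; consequently w_BSC(p) ≥ d_min and w_AWGN(p) ≥ d_min. -/
/-- A codeword of the binary code `C(G)`: every check node has an even number of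
neighbors assigned 1. -/
def IsCodeword {n m : ℕ} (G : TannerGraph n m) (c : Fin n → ZMod 2) : Prop :=
  ∀ j : Fin m, ∑ i ∈ G.N j, c i = 0

/-- A vector `p` is a bad pseudocodeword if some weight vector makes its cost
negative while all codewords (as 0/1 real vectors) have nonnegative cost. -/
def IsBad {n m : ℕ} (G : TannerGraph n m) (p : Fin n → ℝ) : Prop :=
  ∃ w : Fin n → ℝ, (∑ i, p i * w i) < 0 ∧
    ∀ c : Fin n → ZMod 2, IsCodeword G c → 0 ≤ ∑ i, ((c i).val : ℝ) * w i

/-- Max-fractional weight: total sum divided by the largest component. -/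
noncomputable def wMaxFrac {n : ℕ} (p : Fin n → ℝ) : ℝ :=
  (∑ i, p i) / sSup (Set.range p)

/-- Hamming weight of a binary vector. -/
def hammingWt {n : ℕ} (c : Fin n → ZMod 2) : ℕ :=
  (Finset.univ.filter (fun i => c i ≠ 0)).card

/-!
A good pseudocodeword has nonnegative cost for every weight vector that is nonnegative on all
codewords. Testing it against `w = 1 - d_min·e_i` gives `d_min · p_i ≤ Σ p` for each `i`, i.e.
`w_maxfrac(p) ≥ d_min`. The other two weights dominate the max-fractional one: `Σ p_i² ≤ (max p) Σ p`
for AWGN, and for BSC the `e` largest components sum to at least half of `Σ p` but to at most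
`e · max p`, so `w_maxfrac(p) ≤ 2e`, strictly unless the half is hit exactly; since `d_min` is an
integer, `d_min < 2e` gives `d_min ≤ 2e - 1`.
-/

open Finset

lemma ZMod.natCast_val_le_one_of_two (x : ZMod 2) : (x.val : ℝ) ≤ 1 := by
  have : x.val ≤ 1 := Nat.lt_succ_iff.mp (ZMod.val_lt x)
  exact_mod_cast this

lemma sum_val_eq_hammingWt {n : ℕ} (c : Fin n → ZMod 2) :
    ∑ i, ((c i).val : ℝ) = hammingWt c := by
  rw [hammingWt, card_filter]
  push_cast
  refine sum_congr rfl fun i _ => ?_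
  by_cases h : c i = 0
  · simp [h]
  · have hv : (c i).val = 1 := by
      have := ZMod.val_lt (c i)
      have : (c i).val ≠ 0 := by simpa [ZMod.val_eq_zero] using h
      omega
    simp [h, hv]

section Good

variable {n m : ℕ} {G : TannerGraph n m} {p : Fin n → ℝ}

lemma sum_mul_nonneg_of_not_isBad (hgood : ¬ IsBad G p) {w : Fin n → ℝ}
    (hw : ∀ c, IsCodeword G c → 0 ≤ ∑ i, ((c i).val : ℝ) * w i) :
    0 ≤ ∑ i, p i * w i :=
  not_lt.mp fun hneg => hgood ⟨w, hneg, hw⟩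

lemma mul_le_sum_of_not_isBad (hgood : ¬ IsBad G p) {d : ℕ}
    (hd : ∀ c, IsCodeword G c → c ≠ 0 → d ≤ hammingWt c) (k : Fin n) :
    d * p k ≤ ∑ i, p i := by
  classical
  have hcost : ∀ f : Fin n → ℝ,
      ∑ i, f i * (1 - if i = k then (d : ℝ) else 0) = ∑ i, f i - d * f k := by
    intro f
    simp only [mul_sub, mul_one, mul_ite, mul_zero, sum_sub_distrib, sum_ite_eq', mem_univ,
      if_true, mul_comm (f k)]
  have := sum_mul_nonneg_of_not_isBad hgood (w := fun i => 1 - if i = k then (d : ℝ) else 0)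
  simp only [hcost] at this
  suffices h : ∀ c, IsCodeword G c → (d : ℝ) * (c k).val ≤ ∑ i, ((c i).val : ℝ) by
    linarith [this fun c hc => sub_nonneg.mpr (h c hc)]
  intro c hc
  by_cases hc0 : c = 0
  · simp [hc0]
  calc (d : ℝ) * (c k).val ≤ d * 1 := by
        gcongr; exact ZMod.natCast_val_le_one_of_two _
    _ ≤ ∑ i, ((c i).val : ℝ) := by
        rw [mul_one, sum_val_eq_hammingWt]; exact_mod_cast hd c hc hc0

end Good

section Weights

variable {n : ℕ} {p : Fin n → ℝ}

lemma le_iSup_of_fin (p : Fin n → ℝ) (i : Fin n) : p i ≤ ⨆ j, p j :=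
  le_ciSup (Finite.bddAbove_range p) i

lemma iSup_pos_of_nonneg_of_ne_zero (hp0 : ∀ i, 0 ≤ p i) (hpne : p ≠ 0) : 0 < ⨆ i, p i := by
  obtain ⟨i, hi⟩ := Function.ne_iff.mp hpne
  exact ((hp0 i).lt_of_ne' hi).trans_le (le_iSup_of_fin p i)

lemma le_wMaxFrac_of_forall_mul_le (hp0 : ∀ i, 0 ≤ p i) (hpne : p ≠ 0) {a : ℝ}
    (h : ∀ i, a * p i ≤ ∑ i, p i) : a ≤ wMaxFrac p := by
  obtain ⟨i, -⟩ := Function.ne_iff.mp hpne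
  have : Nonempty (Fin n) := ⟨i⟩
  obtain ⟨k, hk⟩ := exists_eq_ciSup_of_finite (f := p)
  change a ≤ (∑ i, p i) / ⨆ i, p i
  rw [le_div_iff₀ (iSup_pos_of_nonneg_of_ne_zero hp0 hpne), ← hk]
  exact h k

lemma wMaxFrac_le_wAWGN (hp0 : ∀ i, 0 ≤ p i) (hpne : p ≠ 0) : wMaxFrac p ≤ wAWGN p := by
  obtain ⟨i, hi⟩ := Function.ne_iff.mp hpne
  set M := ⨆ i, p i
  have hM : 0 < M := iSup_pos_of_nonneg_of_ne_zero hp0 hpne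
  have hT : 0 ≤ ∑ i, p i := sum_nonneg fun i _ => hp0 i
  have hQ : 0 < ∑ i, p i ^ 2 :=
    sum_pos' (fun i _ => sq_nonneg _) ⟨i, mem_univ _, pow_pos ((hp0 i).lt_of_ne' hi) 2⟩
  have hQT : ∑ i, p i ^ 2 ≤ M * ∑ i, p i := by
    rw [mul_sum]
    exact sum_le_sum fun i _ => by
      rw [sq]; exact mul_le_mul_of_nonneg_right (le_iSup_of_fin p i) (hp0 i)
  change (∑ i, p i) / M ≤ (∑ i, p i) ^ 2 / ∑ i, p i ^ 2
  rw [div_le_div_iff₀ hM hQ]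
  nlinarith

lemma maxSum_card_fin (p : Fin n → ℝ) : maxSum p n = ∑ i, p i := by
  have : {S : Finset (Fin n) | #S = n} = {univ} := by
    ext S; simpa using card_eq_iff_eq_univ S
  rw [maxSum, this, Set.image_singleton, csSup_singleton]

lemma exists_sum_eq_maxSum (p : Fin n → ℝ) {e : ℕ} (he : e ≤ n) :
    ∃ S : Finset (Fin n), #S = e ∧ ∑ i ∈ S, p i = maxSum p e := by
  obtain ⟨S, -, hS⟩ := exists_subset_card_eq (s := (univ : Finset (Fin n))) (by simpa using he)
  have hne : ((fun S : Finset (Fin n) => ∑ i ∈ S, p i) '' {S | #S = e}).Nonempty :=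
    ⟨_, S, hS, rfl⟩
  obtain ⟨T, hT, hsum⟩ := hne.csSup_mem (Set.toFinite _)
  exact ⟨T, hT, hsum⟩

lemma maxSum_le_mul_iSup (p : Fin n → ℝ) {e : ℕ} (he : e ≤ n) :
    maxSum p e ≤ e * ⨆ i, p i := by
  obtain ⟨S, hS, hsum⟩ := exists_sum_eq_maxSum p he
  rw [← hsum, ← hS, ← nsmul_eq_mul]
  exact sum_le_card_nsmul S p _ fun i _ => le_iSup_of_fin p i

lemma eBSC_le_and_half_le_maxSum (hp0 : ∀ i, 0 ≤ p i) :
    eBSC p ≤ n ∧ (∑ i, p i) / 2 ≤ maxSum p (eBSC p) := by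
  have hn : n ∈ {e : ℕ | (∑ i, p i) / 2 ≤ maxSum p e} := by
    simp only [Set.mem_ofPred_eq, maxSum_card_fin]
    linarith [sum_nonneg fun i (_ : i ∈ univ) => hp0 i]
  exact ⟨Nat.sInf_le hn, Nat.sInf_mem ⟨n, hn⟩⟩

lemma natCast_le_wBSC_of_le_wMaxFrac (hp0 : ∀ i, 0 ≤ p i) (hpne : p ≠ 0) {d : ℕ}
    (hd : (d : ℝ) ≤ wMaxFrac p) : (d : ℝ) ≤ wBSC p := by
  obtain ⟨he, hhalf⟩ := eBSC_le_and_half_le_maxSum hp0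
  have hM := iSup_pos_of_nonneg_of_ne_zero hp0 hpne
  have hupper := maxSum_le_mul_iSup p he
  change (d : ℝ) ≤ (∑ i, p i) / ⨆ i, p i at hd
  rw [le_div_iff₀ hM] at hd
  rw [wBSC]
  split_ifs with hexact
  · nlinarith
  · have hlt : (d : ℝ) < 2 * eBSC p := by nlinarith [lt_of_le_of_ne hhalf (Ne.symm hexact)]
    rw [le_sub_iff_add_le]
    exact_mod_cast (show d + 1 ≤ 2 * eBSC p by exact_mod_cast hlt)

end Weights

theorem good_pscw_weight_ge_dmin {n m : ℕ} (G : TannerGraph n m) (dmin : ℕ)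
    (hdmin : IsLeast {k : ℕ | ∃ c : Fin n → ZMod 2,
      IsCodeword G c ∧ c ≠ 0 ∧ hammingWt c = k} dmin)
    (p : Fin n → ℝ) (hp0 : ∀ i, 0 ≤ p i) (hpne : p ≠ 0)
    (hgood : ¬ IsBad G p) :
    (dmin : ℝ) ≤ wMaxFrac p ∧ (dmin : ℝ) ≤ wBSC p ∧ (dmin : ℝ) ≤ wAWGN p := by
  have hdist : ∀ c, IsCodeword G c → c ≠ 0 → dmin ≤ hammingWt c :=
    fun c hc hc0 => hdmin.2 ⟨c, hc, hc0, rfl⟩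
  have hmaxfrac : (dmin : ℝ) ≤ wMaxFrac p :=
    le_wMaxFrac_of_forall_mul_le hp0 hpne (mul_le_sum_of_not_isBad hgood hdist)
  exact ⟨hmaxfrac, natCast_le_wBSC_of_le_wMaxFrac hp0 hpne hmaxfrac,
    hmaxfrac.trans (wMaxFrac_le_wAWGN hp0 hpne)⟩
end

section
/- Let p be a pseudocodeword of a Tanner graph G. Then there exist an integer k ≥ 0, nonzero codewords c^(1),…,c^(k) ∈ C(G) (not necessarily distinct, viewed as 0/1 vectors in Z^n), and a vector r ∈ Z_{≥0}^n such that p = c^(1)+…+c^(k)+r in Z^n, the support of r does not contain the support of any nonzero codeword of C(G), and every entry of r is even. -/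
-- step 1: p mod 2 is a codeword
lemma mod2_codeword {n m : ℕ} (G : TannerGraph n m) (p : Fin n → ℕ)
    (hp : IsPseudocodeword G p) : IsCodeword G (fun i => (p i : ZMod 2)) := by
  intro j
  obtain ⟨x, hx⟩ := hp j
  have key : ∑ i ∈ G.N j, p i
      = ∑ S ∈ (G.N j).powerset.filter (fun S => Even S.card), S.card * x S := by
    calc ∑ i ∈ G.N j, p i
        = ∑ i ∈ G.N j, ∑ S ∈ (G.N j).powerset.filter (fun S => Even S.card ∧ i ∈ S), x S :=
          Finset.sum_congr rfl (fun i hi => hx i hi)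
      _ = ∑ i ∈ G.N j, ∑ S ∈ (G.N j).powerset.filter (fun S => Even S.card),
            if i ∈ S then x S else 0 := by
          refine Finset.sum_congr rfl (fun i _ => ?_)
          rw [← Finset.filter_filter, Finset.sum_filter]
      _ = ∑ S ∈ (G.N j).powerset.filter (fun S => Even S.card),
            ∑ i ∈ G.N j, if i ∈ S then x S else 0 := Finset.sum_comm
      _ = _ := by
          refine Finset.sum_congr rfl (fun S hS => ?_)
          simp only [Finset.mem_filter, Finset.mem_powerset] at hS
          rw [Finset.sum_ite_mem, Finset.inter_eq_right.mpr hS.1]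
          simp [Finset.sum_const, mul_comm]
  have heven : Even (∑ i ∈ G.N j, p i) := by
    rw [key]
    apply Finset.even_sum
    · intro S hS
      simp only [Finset.mem_filter] at hS
      exact hS.2.mul_right _
  have : ((∑ i ∈ G.N j, p i : ℕ) : ZMod 2) = 0 := by
    rw [ZMod.natCast_eq_zero_iff]
    exact heven.two_dvd
  simpa [Nat.cast_sum] using this

lemma even_decomp {n m : ℕ} (G : TannerGraph n m) :
    ∀ N (q : Fin n → ℕ), (∑ i, q i) = N → (∀ i, Even (q i)) →
    ∃ (k : ℕ) (c : Fin k → (Fin n → ZMod 2)) (r : Fin n → ℕ),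
      (∀ l : Fin k, IsCodeword G (c l) ∧ c l ≠ 0) ∧
      (∀ i, q i = (∑ l : Fin k, (c l i).val) + r i) ∧
      (∀ c' : Fin n → ZMod 2, IsCodeword G c' → c' ≠ 0 →
        ¬ (∀ i, c' i ≠ 0 → r i ≠ 0)) ∧
      (∀ i, Even (r i)) := by
  intro N
  induction N using Nat.strong_induction_on with
  | _ N ih =>
    intro q hsum hev
    by_cases h : ∃ c' : Fin n → ZMod 2, IsCodeword G c' ∧ c' ≠ 0 ∧ ∀ i, c' i ≠ 0 → q i ≠ 0
    · obtain ⟨c', hc', hc'0, hsupp⟩ := h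
      set q' : Fin n → ℕ := fun i => q i - 2 * (c' i).val with hq'
      have hle : ∀ i, 2 * (c' i).val ≤ q i := by
        intro i
        by_cases hi : c' i = 0
        · simp [hi]
        · have h1 : (c' i).val < 2 := (c' i).val_lt
          have h2 : q i ≠ 0 := hsupp i hi
          have h3 : q i % 2 = 0 := Nat.even_iff.mp (hev i)
          omega
      have hq'' : ∀ i, q i = 2 * (c' i).val + q' i := fun i => by
        have := hle i; simp only [hq']; omega
      have hev' : ∀ i, Even (q' i) := by
        intro i
        have h3 : q i % 2 = 0 := Nat.even_iff.mp (hev i)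
        have := hle i
        simp only [hq', Nat.even_iff]
        omega
      obtain ⟨i0, hi0⟩ := Function.ne_iff.mp hc'0
      have hi0v : (c' i0).val ≠ 0 := by
        simpa [ZMod.val_eq_zero] using hi0
      have hlt : (∑ i, q' i) < N := by
        rw [← hsum]
        refine Finset.sum_lt_sum (fun i _ => by have := hle i; simp only [hq']; omega)
          ⟨i0, Finset.mem_univ i0, ?_⟩
        have h2 : q i0 ≠ 0 := hsupp i0 hi0
        have := hle i0
        simp only [hq']
        omega
      obtain ⟨k, c, r, h1, h2, h3, h4⟩ := ih _ hlt q' rfl hev'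
      refine ⟨k + 2, Fin.cons c' (Fin.cons c' c), r, ?_, ?_, h3, h4⟩
      · intro l
        refine Fin.cases ⟨hc', hc'0⟩ (fun l' => ?_) l
        exact Fin.cases ⟨hc', hc'0⟩ (fun l'' => h1 l'') l'
      · intro i
        have ha := h2 i
        have hb := hq'' i
        show q i = (∑ l : Fin (k+1+1),
          ((Fin.cons c' (Fin.cons c' c) : Fin (k+1+1) → Fin n → ZMod 2) l i).val) + r i
        rw [Fin.sum_univ_succ]
        simp only [Fin.cons_zero, Fin.cons_succ]
        rw [Fin.sum_univ_succ]
        simp only [Fin.cons_zero, Fin.cons_succ]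
        omega
    · push_neg at h
      exact ⟨0, Fin.elim0, q, fun l => l.elim0, fun i => by simp,
        fun c'' h1 h2 habs => by obtain ⟨i, hi, hqi⟩ := h c'' h1 h2; exact habs i hi hqi, hev⟩

theorem pscw_decomposition {n m : ℕ} (G : TannerGraph n m)
    (p : Fin n → ℕ) (hp : IsPseudocodeword G p) :
    ∃ (k : ℕ) (c : Fin k → (Fin n → ZMod 2)) (r : Fin n → ℕ),
      (∀ l : Fin k, IsCodeword G (c l) ∧ c l ≠ 0) ∧
      (∀ i, p i = (∑ l : Fin k, (c l i).val) + r i) ∧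
      (∀ c' : Fin n → ZMod 2, IsCodeword G c' → c' ≠ 0 →
        ¬ (∀ i, c' i ≠ 0 → r i ≠ 0)) ∧
      (∀ i, Even (r i)) := by
  set c0 : Fin n → ZMod 2 := fun i => (p i : ZMod 2) with hc0
  have hc0cw : IsCodeword G c0 := mod2_codeword G p hp
  have hval : ∀ i, (c0 i).val = p i % 2 := fun i => by
    simp [hc0, ZMod.val_natCast]
  set q : Fin n → ℕ := fun i => p i - (c0 i).val with hq
  have hqe : ∀ i, Even (q i) := by
    intro i
    simp only [hq, hval i, Nat.even_iff]
    omega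
  have hpq : ∀ i, p i = (c0 i).val + q i := by
    intro i
    simp only [hq, hval i]
    omega
  obtain ⟨k, c, r, h1, h2, h3, h4⟩ := even_decomp G (∑ i, q i) q rfl hqe
  by_cases h0 : c0 = 0
  · refine ⟨k, c, r, h1, fun i => ?_, h3, h4⟩
    have : (c0 i).val = 0 := by rw [h0]; simp
    have := hpq i
    have := h2 i
    omega
  · refine ⟨k + 1, Fin.cons c0 c, r, ?_, fun i => ?_, h3, h4⟩
    · intro l
      exact Fin.cases ⟨hc0cw, h0⟩ (fun l' => h1 l') l
    · have ha := h2 i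
      have hb := hpq i
      show p i = (∑ l : Fin (k+1),
        ((Fin.cons c0 c : Fin (k+1) → Fin n → ZMod 2) l i).val) + r i
      rw [Fin.sum_univ_succ]
      simp only [Fin.cons_zero, Fin.cons_succ]
      omega
end

section
/- Let G be a Tanner graph whose code C(G) contains a nonzero codeword, with d_min the minimum Hamming weight of a nonzero codeword, and let p ∈ R_{≥0}^n be a nonzero vector with |supp(p)| < d_min. Then p is a bad pseudocodeword: there exists a weight vector w ∈ R^n with ⟨p,w⟩ < 0 and ⟨c,w⟩ ≥ 0 for every codeword c ∈ C(G). -/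
theorem small_support_is_bad {n m : ℕ} (G : TannerGraph n m) (dmin : ℕ)
    (hdmin : IsLeast {k : ℕ | ∃ c : Fin n → ZMod 2,
      IsCodeword G c ∧ c ≠ 0 ∧ hammingWt c = k} dmin)
    (p : Fin n → ℝ) (hp0 : ∀ i, 0 ≤ p i) (hpne : p ≠ 0)
    (hsupp : (suppF p).card < dmin) :
    ∃ w : Fin n → ℝ, (∑ i, p i * w i) < 0 ∧
      ∀ c : Fin n → ZMod 2, IsCodeword G c → 0 ≤ ∑ i, ((c i).val : ℝ) * w i := by
  classical
  set S : Finset (Fin n) := suppF p with hS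
  refine ⟨fun i => if p i ≠ 0 then (-1 : ℝ) else n, ?_, ?_⟩
  · have heq : ∀ i ∈ Finset.univ, p i * (if p i ≠ 0 then (-1 : ℝ) else n) = -(p i) := by
      intro i _
      by_cases h : p i = 0 <;> simp [h]
    rw [Finset.sum_congr rfl heq, Finset.sum_neg_distrib]
    obtain ⟨i0, hi0⟩ := Function.ne_iff.mp hpne
    have hi0' : 0 < p i0 := lt_of_le_of_ne (hp0 i0) (Ne.symm hi0)
    have hpos : 0 < ∑ i, p i :=
      Finset.sum_pos' (fun i _ => hp0 i) ⟨i0, Finset.mem_univ _, hi0'⟩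
    linarith
  · intro c hc
    by_cases hc0 : c = 0
    · simp [hc0]
    · have hdle : dmin ≤ hammingWt c := hdmin.2 ⟨c, hc, hc0, rfl⟩
      -- there is i0 with c i0 ≠ 0 and p i0 = 0
      have hex : ∃ i0, c i0 ≠ 0 ∧ p i0 = 0 := by
        by_contra h
        push_neg at h
        have hsub : Finset.univ.filter (fun i => c i ≠ 0) ⊆ S := by
          intro i hi
          simp only [Finset.mem_filter, Finset.mem_univ, true_and] at hi
          simp only [hS, suppF, Finset.mem_filter, Finset.mem_univ, true_and]
          exact h i hi
        have := Finset.card_le_card hsub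
        have : hammingWt c ≤ S.card := this
        omega
      obtain ⟨i0, hci0, hpi0⟩ := hex
      have hsplit := Finset.sum_filter_add_sum_filter_not Finset.univ
        (fun i => p i ≠ 0) (fun i => ((c i).val : ℝ) * (if p i ≠ 0 then (-1 : ℝ) else n))
      rw [← hsplit]
      have hval : ∀ i, ((c i).val : ℝ) ≤ 1 := by
        intro i
        have : (c i).val ≤ 1 := Nat.lt_succ_iff.mp (c i).val_lt
        exact_mod_cast this
      have hval0 : ∀ i, (0:ℝ) ≤ ((c i).val : ℝ) := fun i => Nat.cast_nonneg _
      -- first sum ≥ -S.card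
      have h1 : -(S.card : ℝ) ≤ ∑ i ∈ Finset.univ.filter (fun i => p i ≠ 0),
          ((c i).val : ℝ) * (if p i ≠ 0 then (-1 : ℝ) else n) := by
        have : ∀ i ∈ Finset.univ.filter (fun i => p i ≠ 0),
            (-1 : ℝ) ≤ ((c i).val : ℝ) * (if p i ≠ 0 then (-1 : ℝ) else n) := by
          intro i hi
          simp only [Finset.mem_filter, Finset.mem_univ, true_and] at hi
          rw [if_pos hi]
          nlinarith [hval i, hval0 i]
        calc -(S.card : ℝ) = ∑ _i ∈ Finset.univ.filter (fun i => p i ≠ 0), (-1 : ℝ) := by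
              simp [hS, suppF]
          _ ≤ _ := Finset.sum_le_sum this
      -- second sum ≥ n
      have hi0mem : i0 ∈ Finset.univ.filter (fun i => ¬ p i ≠ 0) := by
        simp [hpi0]
      have hci0' : (1:ℝ) ≤ ((c i0).val : ℝ) := by
        have : (c i0).val ≠ 0 := by
          intro h
          apply hci0
          exact (ZMod.val_eq_zero _).mp h
        have : 1 ≤ (c i0).val := Nat.one_le_iff_ne_zero.mpr this
        exact_mod_cast this
      have h2 : (n : ℝ) ≤ ∑ i ∈ Finset.univ.filter (fun i => ¬ p i ≠ 0),
          ((c i).val : ℝ) * (if p i ≠ 0 then (-1 : ℝ) else n) := by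
        have hterm : (n : ℝ) ≤ ((c i0).val : ℝ) * (if p i0 ≠ 0 then (-1 : ℝ) else n) := by
          rw [if_neg (by simpa using hpi0)]
          nlinarith [hci0']
        refine le_trans hterm (Finset.single_le_sum (f := fun i => ((c i).val : ℝ) * (if p i ≠ 0 then (-1 : ℝ) else n)) ?_ hi0mem)
        intro i hi
        simp only [Finset.mem_filter, Finset.mem_univ, true_and, not_not] at hi
        simp only [hi, ne_eq, not_true_eq_false, if_false]
        positivity
      have hScard : (S.card : ℝ) ≤ n := by
        have := Finset.card_le_card (Finset.subset_univ S)
        simp only [Finset.card_univ, Fintype.card_fin] at this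
        exact_mod_cast this
      linarith
end

section
/- Let S be a minimal stopping set of a Tanner graph G that does not have property Θ. Then every nonnegative real vector p satisfying the fundamental cone inequalities of G with supp(p) = S takes a single common value on all coordinates in S; consequently, every irreducible pseudocodeword of G with support S has maximal component equal to 1 or 2. -/
/-- The support of a natural-number vector, as a finset. -/
def suppN {n : ℕ} (p : Fin n → ℕ) : Finset (Fin n) :=
  Finset.univ.filter (fun i => p i ≠ 0)

/-- A minimal stopping set: a stopping set containing no nonempty proper subset
that is a stopping set. -/
def IsMinimalStoppingSet {n m : ℕ} (G : TannerGraph n m) (S : Finset (Fin n)) : Prop :=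
  IsStoppingSet G S ∧ ∀ S' : Finset (Fin n), S' ⊂ S → S'.Nonempty → ¬ IsStoppingSet G S'

/-- Two distinct variable nodes of `S` are linked in `G|_S` if they are both
adjacent to a common check node whose degree in the subgraph induced by `S` is
two.  A path in `G|_S` all of whose check nodes have degree two is a chain of
such links. -/
def LinkedIn {n m : ℕ} (G : TannerGraph n m) (S : Finset (Fin n)) (a b : Fin n) : Prop :=
  ∃ j : Fin m, (G.N j ∩ S).card = 2 ∧ a ∈ G.N j ∩ S ∧ b ∈ G.N j ∩ S ∧ a ≠ b

/-- A stopping set `S` has property Θ if it contains two variable nodes that are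
not connected by any path in `G|_S` all of whose check nodes have degree two in
`G|_S`. -/
def HasPropertyTheta {n m : ℕ} (G : TannerGraph n m) (S : Finset (Fin n)) : Prop :=
  ∃ a ∈ S, ∃ b ∈ S, ¬ Relation.ReflTransGen (LinkedIn G S) a b

section Aux

open Finset

variable {n m : ℕ}

/-- Rewriting of a pseudocodeword's local sum over the even-weight filter. -/
lemma pcw_form (G : TannerGraph n m) (p : Fin n → ℕ) (j : Fin m)
    (x : Finset (Fin n) → ℕ)
    (hx : ∀ i ∈ G.N j,
      p i = ∑ S ∈ (G.N j).powerset.filter (fun S => Even S.card ∧ i ∈ S), x S)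
    (k : Fin n) (hk : k ∈ G.N j) :
    p k = ∑ T ∈ (G.N j).powerset.filter (fun T => Even T.card),
      if k ∈ T then x T else 0 := by
  rw [hx k hk, ← Finset.sum_filter, Finset.filter_filter]

/-- Every pseudocodeword, cast to the reals, lies in the fundamental cone. -/
lemma pcw_in_cone (G : TannerGraph n m) (p : Fin n → ℕ) (hp : IsPseudocodeword G p) :
    InFundamentalCone G (fun i => (p i : ℝ)) := by
  refine ⟨fun i => Nat.cast_nonneg _, fun j i hi => ?_⟩
  obtain ⟨x, hx⟩ := hp j
  have key : p i ≤ ∑ k ∈ (G.N j).erase i, p k := by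
    have hsum : ∑ k ∈ (G.N j).erase i, p k
        = ∑ T ∈ (G.N j).powerset.filter (fun T => Even T.card),
            ((G.N j).erase i ∩ T).card * x T := by
      calc ∑ k ∈ (G.N j).erase i, p k
          = ∑ k ∈ (G.N j).erase i,
              ∑ T ∈ (G.N j).powerset.filter (fun T => Even T.card),
                if k ∈ T then x T else 0 := by
            refine Finset.sum_congr rfl fun k hk => ?_
            exact pcw_form G p j x hx k (Finset.mem_of_mem_erase hk)
        _ = ∑ T ∈ (G.N j).powerset.filter (fun T => Even T.card),
              ∑ k ∈ (G.N j).erase i, if k ∈ T then x T else 0 := Finset.sum_comm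
        _ = _ := by
            refine Finset.sum_congr rfl fun T _ => ?_
            rw [Finset.sum_ite_mem, Finset.sum_const, smul_eq_mul]
    rw [hsum, pcw_form G p j x hx i hi]
    refine Finset.sum_le_sum fun T hT => ?_
    obtain ⟨hTpow, hTeven⟩ := Finset.mem_filter.mp hT
    have hTsub : T ⊆ G.N j := Finset.mem_powerset.mp hTpow
    by_cases hiT : i ∈ T
    · rw [if_pos hiT]
      have h2 : 2 ≤ T.card := by
        rcases hTeven with ⟨t, ht⟩
        have : 0 < T.card := Finset.card_pos.mpr ⟨i, hiT⟩
        omega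
      have hne : (T.erase i).Nonempty := by
        rw [← Finset.card_pos, Finset.card_erase_of_mem hiT]; omega
      obtain ⟨k, hk⟩ := hne
      have hk' : k ∈ (G.N j).erase i ∩ T := by
        rw [Finset.mem_inter, Finset.mem_erase]
        exact ⟨⟨(Finset.mem_erase.mp hk).1, hTsub (Finset.mem_of_mem_erase hk)⟩,
          Finset.mem_of_mem_erase hk⟩
      have hcard : 1 ≤ ((G.N j).erase i ∩ T).card := Finset.card_pos.mpr ⟨k, hk'⟩
      calc x T = 1 * x T := (one_mul _).symm
        _ ≤ _ := Nat.mul_le_mul_right _ hcard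
    · rw [if_neg hiT]; exact Nat.zero_le _
  push_cast
  exact_mod_cast key

/-- The sum of a pseudocodeword over any check neighborhood is even. -/
lemma pcw_even_sum (G : TannerGraph n m) (p : Fin n → ℕ) (hp : IsPseudocodeword G p)
    (j : Fin m) : Even (∑ i ∈ G.N j, p i) := by
  obtain ⟨x, hx⟩ := hp j
  have hsum : ∑ i ∈ G.N j, p i
      = ∑ T ∈ (G.N j).powerset.filter (fun T => Even T.card), T.card * x T := by
    calc ∑ i ∈ G.N j, p i
        = ∑ i ∈ G.N j, ∑ T ∈ (G.N j).powerset.filter (fun T => Even T.card),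
            if i ∈ T then x T else 0 :=
          Finset.sum_congr rfl fun k hk => pcw_form G p j x hx k hk
      _ = ∑ T ∈ (G.N j).powerset.filter (fun T => Even T.card),
            ∑ i ∈ G.N j, if i ∈ T then x T else 0 := Finset.sum_comm
      _ = _ := by
          refine Finset.sum_congr rfl fun T hT => ?_
          obtain ⟨hTpow, _⟩ := Finset.mem_filter.mp hT
          rw [Finset.sum_ite_mem, Finset.inter_eq_right.mpr (Finset.mem_powerset.mp hTpow),
            Finset.sum_const, smul_eq_mul]
  rw [hsum]
  refine Finset.even_sum _ fun T hT => ?_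
  exact ((Finset.mem_filter.mp hT).2).mul_right _

/-- On a stopping set, the constant vector `d` is a pseudocodeword provided `d`
is even or every adjacent check has an even number of neighbors in `S`. -/
lemma const_pcw (G : TannerGraph n m) (S : Finset (Fin n)) (hS : IsStoppingSet G S)
    (d : ℕ) (hd : Even d ∨ ∀ j, (G.N j ∩ S).Nonempty → Even (G.N j ∩ S).card) :
    IsPseudocodeword G (fun i => if i ∈ S then d else 0) := by
  intro j
  rcases (G.N j ∩ S).eq_empty_or_nonempty with hAe | hAne
  · refine ⟨0, fun i hi => ?_⟩
    have hiS : i ∉ S := fun h => by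
      have : i ∈ G.N j ∩ S := Finset.mem_inter.mpr ⟨hi, h⟩
      simp [hAe] at this
    simp [hiS]
  have hASub : G.N j ∩ S ⊆ G.N j := Finset.inter_subset_left
  have ht2 : 2 ≤ (G.N j ∩ S).card := hS j hAne
  by_cases hte : Even (G.N j ∩ S).card
  · -- use the full intersection with weight d
    refine ⟨fun T => if T = G.N j ∩ S then d else 0, fun i hi => ?_⟩
    show (if i ∈ S then d else 0) = _
    rw [Finset.sum_ite_eq']
    by_cases hiS : i ∈ S
    · rw [if_pos hiS, if_pos]
      rw [Finset.mem_filter, Finset.mem_powerset]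
      exact ⟨hASub, hte, Finset.mem_inter.mpr ⟨hi, hiS⟩⟩
    · rw [if_neg hiS, if_neg]
      rw [Finset.mem_filter]
      rintro ⟨-, -, hiA⟩
      exact hiS (Finset.mem_inter.mp hiA).2
  · -- odd intersection: d must be even
    have hdev : Even d := by
      rcases hd with h | h
      · exact h
      · exact absurd (h j hAne) hte
    obtain ⟨e, he⟩ := hdev
    have ht3 : 2 < (G.N j ∩ S).card := by
      rcases Nat.lt_or_ge 2 (G.N j ∩ S).card with h | h
      · exact h
      · exact absurd (le_antisymm h ht2 ▸ (even_two : Even 2)) hte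
    obtain ⟨a, b, c, ha, hb, hc, hab, hac, hbc⟩ := Finset.two_lt_card_iff.mp ht3
    have haj : a ∈ G.N j := hASub ha
    have hbj : b ∈ G.N j := hASub hb
    have hcj : c ∈ G.N j := hASub hc
    have haS : a ∈ S := (Finset.mem_inter.mp ha).2
    have hbS : b ∈ S := (Finset.mem_inter.mp hb).2
    have hcS : c ∈ S := (Finset.mem_inter.mp hc).2
    have hsub_ab : ({a, b} : Finset (Fin n)) ⊆ G.N j := by
      simp [Finset.insert_subset_iff, haj, hbj]
    have hsub_ac : ({a, c} : Finset (Fin n)) ⊆ G.N j := by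
      simp [Finset.insert_subset_iff, haj, hcj]
    have hsub_bc : ({b, c} : Finset (Fin n)) ⊆ G.N j := by
      simp [Finset.insert_subset_iff, hbj, hcj]
    have hev_ab : Even ({a, b} : Finset (Fin n)).card := by
      rw [Finset.card_pair hab]; exact even_two
    have hev_ac : Even ({a, c} : Finset (Fin n)).card := by
      rw [Finset.card_pair hac]; exact even_two
    have hev_bc : Even ({b, c} : Finset (Fin n)).card := by
      rw [Finset.card_pair hbc]; exact even_two
    have hrest_sub : (G.N j ∩ S) \ {a, b, c} ⊆ G.N j :=
      fun y hy => hASub (Finset.mem_sdiff.mp hy).1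
    have hrest_card : Even ((G.N j ∩ S) \ {a, b, c}).card := by
      have habc : ({a, b, c} : Finset (Fin n)) ⊆ G.N j ∩ S := by
        simp [Finset.insert_subset_iff, ha, hb, hc]
      have hcabc : ({a, b, c} : Finset (Fin n)).card = 3 := by
        rw [Finset.card_insert_of_notMem (by simp [hab, hac]),
          Finset.card_insert_of_notMem (by simp [hbc]), Finset.card_singleton]
      rw [Finset.card_sdiff_of_subset habc, hcabc]
      rcases Nat.even_or_odd (G.N j ∩ S).card with h | h
      · exact absurd h hte
      · obtain ⟨t, hth⟩ := h
        refine ⟨t - 1, by omega⟩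
    refine ⟨fun T => (if T = {a, b} then e else 0) + (if T = {a, c} then e else 0)
      + (if T = {b, c} then e else 0)
      + (if T = (G.N j ∩ S) \ {a, b, c} then d else 0), fun i hi => ?_⟩
    show (if i ∈ S then d else 0) = _
    rw [Finset.sum_add_distrib, Finset.sum_add_distrib, Finset.sum_add_distrib,
      Finset.sum_ite_eq', Finset.sum_ite_eq', Finset.sum_ite_eq', Finset.sum_ite_eq']
    have hmem : ∀ B : Finset (Fin n), B ⊆ G.N j → Even B.card → i ∈ B →
        B ∈ (G.N j).powerset.filter (fun T => Even T.card ∧ i ∈ T) := by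
      intro B h1 h2 h3
      rw [Finset.mem_filter, Finset.mem_powerset]
      exact ⟨h1, h2, h3⟩
    have hnmem : ∀ B : Finset (Fin n), i ∉ B →
        B ∉ (G.N j).powerset.filter (fun T => Even T.card ∧ i ∈ T) := by
      intro B h1 h2
      exact h1 (Finset.mem_filter.mp h2).2.2
    by_cases hiS : i ∈ S
    · have hiA : i ∈ G.N j ∩ S := Finset.mem_inter.mpr ⟨hi, hiS⟩
      rw [if_pos hiS]
      by_cases hia : i = a
      · subst hia
        rw [if_pos (hmem _ hsub_ab hev_ab (by simp)),
          if_pos (hmem _ hsub_ac hev_ac (by simp)),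
          if_neg (hnmem _ (by simp [hab, hac])),
          if_neg (hnmem _ (by simp))]
        omega
      · by_cases hib : i = b
        · subst hib
          rw [if_pos (hmem _ hsub_ab hev_ab (by simp)),
            if_neg (hnmem _ (by simp [Ne.symm hab, hbc])),
            if_pos (hmem _ hsub_bc hev_bc (by simp)),
            if_neg (hnmem _ (by simp))]
          omega
        · by_cases hic : i = c
          · subst hic
            rw [if_neg (hnmem _ (by simp [Ne.symm hac, Ne.symm hbc])),
              if_pos (hmem _ hsub_ac hev_ac (by simp)),
              if_pos (hmem _ hsub_bc hev_bc (by simp)),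
              if_neg (hnmem _ (by simp))]
            omega
          · rw [if_neg (hnmem _ (by simp [hia, hib])),
              if_neg (hnmem _ (by simp [hia, hic])),
              if_neg (hnmem _ (by simp [hib, hic])),
              if_pos (hmem _ hrest_sub hrest_card
                (Finset.mem_sdiff.mpr ⟨hiA, by simp [hia, hib, hic]⟩))]
            omega
    · have hnia : i ≠ a := fun h => hiS (h ▸ haS)
      have hnib : i ≠ b := fun h => hiS (h ▸ hbS)
      have hnic : i ≠ c := fun h => hiS (h ▸ hcS)
      rw [if_neg hiS,
        if_neg (hnmem _ (by simp [hnia, hnib])),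
        if_neg (hnmem _ (by simp [hnia, hnic])),
        if_neg (hnmem _ (by simp [hnib, hnic])),
        if_neg (hnmem _ (fun h => hiS (Finset.mem_inter.mp (Finset.mem_sdiff.mp h).1).2))]
      omega

end Aux

theorem minimal_stopping_set_without_theta {n m : ℕ} (G : TannerGraph n m)
    (S : Finset (Fin n)) (hmin : IsMinimalStoppingSet G S)
    (htheta : ¬ HasPropertyTheta G S) :
    (∀ p : Fin n → ℝ, InFundamentalCone G p → suppF p = S →
      ∃ k : ℝ, ∀ i ∈ S, p i = k) ∧
    (∀ p : Fin n → ℕ, IsPseudocodeword G p → IsIrreduciblePcw G p → suppN p = S →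
      Finset.univ.sup p = 1 ∨ Finset.univ.sup p = 2) := by
  unfold HasPropertyTheta at htheta
  push_neg at htheta
  have part1 : ∀ p : Fin n → ℝ, InFundamentalCone G p → suppF p = S →
      ∃ k : ℝ, ∀ i ∈ S, p i = k := by
    intro p hp hs
    have hzero : ∀ k, k ∉ S → p k = 0 := by
      intro k hk
      by_contra h
      exact hk (hs ▸ Finset.mem_filter.mpr ⟨Finset.mem_univ k, h⟩)
    have step : ∀ a b, LinkedIn G S a b → p a = p b := by
      rintro a b ⟨j, hcard, haj, hbj, hab⟩
      have key : ∀ u v : Fin n, u ∈ G.N j ∩ S → v ∈ G.N j ∩ S → u ≠ v → p u ≤ p v := by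
        intro u v hu hv huv
        have hset : ({u, v} : Finset (Fin n)) = G.N j ∩ S := by
          apply Finset.eq_of_subset_of_card_le
          · intro y hy
            rcases Finset.mem_insert.mp hy with rfl | hy'
            · exact hu
            · rw [Finset.mem_singleton.mp hy']; exact hv
          · rw [hcard, Finset.card_pair huv]
        have h1 := hp.2 j u (Finset.mem_inter.mp hu).1
        have h2 : ∑ k ∈ (G.N j).erase u, p k = p v := by
          rw [← Finset.sum_subset (Finset.inter_subset_left :
              (G.N j).erase u ∩ S ⊆ (G.N j).erase u)
              (fun x _ hx2 => hzero x fun hxS => hx2 (Finset.mem_inter.mpr ⟨‹_›, hxS⟩))]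
          have : (G.N j).erase u ∩ S = {v} := by
            rw [Finset.erase_inter, ← hset, Finset.erase_insert (by simp [huv])]
          rw [this, Finset.sum_singleton]
        rw [h2] at h1
        exact h1
      exact le_antisymm (key a b haj hbj hab) (key b a hbj haj (Ne.symm hab))
    rcases S.eq_empty_or_nonempty with rfl | ⟨a, ha⟩
    · exact ⟨0, by simp⟩
    refine ⟨p a, fun b hb => ?_⟩
    have hconn := htheta a ha b hb
    clear hb
    induction hconn with
    | refl => rfl
    | tail _ hlk ih => exact (step _ _ hlk).symm.trans ih
  refine ⟨part1, ?_⟩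
  intro p hpcw hirr hsupp
  have hzero : ∀ i, i ∉ S → p i = 0 := by
    intro i hi
    by_contra h
    exact hi (hsupp ▸ Finset.mem_filter.mpr ⟨Finset.mem_univ i, h⟩)
  have hpos : ∀ i ∈ S, p i ≠ 0 := by
    intro i hi
    rw [← hsupp] at hi
    exact (Finset.mem_filter.mp hi).2
  obtain ⟨i0, hi0⟩ : ∃ i, p i ≠ 0 := by
    by_contra h
    push_neg at h
    exact hirr.1 (funext fun i => h i)
  have hi0S : i0 ∈ S := hsupp ▸ Finset.mem_filter.mpr ⟨Finset.mem_univ i0, hi0⟩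
  -- p is constant on S
  have hsF : suppF (fun i => (p i : ℝ)) = S := by
    rw [← hsupp]
    unfold suppF suppN
    apply Finset.filter_congr
    intro i _
    simp [Nat.cast_eq_zero]
  obtain ⟨k, hk⟩ := part1 _ (pcw_in_cone G p hpcw) hsF
  set c := p i0 with hc
  have hconst : ∀ i ∈ S, p i = c := by
    intro i hi
    have := (hk i hi).trans (hk i0 hi0S).symm
    exact_mod_cast this
  have hc1 : 1 ≤ c := Nat.one_le_iff_ne_zero.mpr hi0
  -- parity condition when c is odd
  have hparity : ¬ Even c → ∀ j, (G.N j ∩ S).Nonempty → Even (G.N j ∩ S).card := by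
    intro hodd j hne
    have hesum := pcw_even_sum G p hpcw j
    have hsum : ∑ i ∈ G.N j, p i = (G.N j ∩ S).card * c := by
      calc ∑ i ∈ G.N j, p i = ∑ i ∈ G.N j, if i ∈ S then c else 0 := by
            refine Finset.sum_congr rfl fun i _ => ?_
            by_cases hiS : i ∈ S
            · rw [if_pos hiS]; exact hconst i hiS
            · rw [if_neg hiS]; exact hzero i hiS
        _ = ∑ i ∈ G.N j ∩ S, c := Finset.sum_ite_mem _ _ _
        _ = (G.N j ∩ S).card * c := by rw [Finset.sum_const, smul_eq_mul]
    rw [hsum] at hesum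
    rcases Nat.even_mul.mp hesum with h | h
    · exact h
    · exact absurd h hodd
  have hc2 : c ≤ 2 := by
    by_contra hc3
    push_neg at hc3
    -- decompose p = (const 2) + (const (c-2))
    have hq : IsPseudocodeword G (fun i => if i ∈ S then 2 else 0) :=
      const_pcw G S hmin.1 2 (Or.inl even_two)
    have hr : IsPseudocodeword G (fun i => if i ∈ S then c - 2 else 0) := by
      refine const_pcw G S hmin.1 (c - 2) ?_
      by_cases he : Even c
      · left; obtain ⟨t, ht⟩ := he; refine ⟨t - 1, by omega⟩
      · right; exact hparity he
    refine hirr.2 ⟨_, _, hq, hr, ?_, ?_, ?_⟩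
    · intro h
      have := congrFun h i0
      simp [hi0S] at this
    · intro h
      have := congrFun h i0
      simp only [Pi.zero_apply, if_pos hi0S] at this
      omega
    · funext i
      by_cases hiS : i ∈ S
      · simp only [Pi.add_apply, if_pos hiS, hconst i hiS]
        omega
      · simp only [Pi.add_apply, if_neg hiS, hzero i hiS]
  -- the sup equals c
  have hsup : Finset.univ.sup p = c := by
    apply le_antisymm
    · refine Finset.sup_le fun i _ => ?_
      by_cases hiS : i ∈ S
      · exact le_of_eq (hconst i hiS)
      · rw [hzero i hiS]; exact Nat.zero_le _
    · exact hc ▸ Finset.le_sup (Finset.mem_univ i0)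
  rw [hsup]
  omega
end

section
/- Let S be a nonempty stopping set of a Tanner graph G such that no nonzero codeword of C(G) has support contained in S. Then: (i) the vector 2·1_S (taking value 2 on the coordinates of S and 0 elsewhere) is a pseudocodeword of G with support S; and (ii) every nonzero vector p ∈ R_{≥0}^n with supp(p) = S — in particular every pseudocodeword of G with support S — is bad: there exists a weight vector w ∈ R^n with ⟨p,w⟩ < 0 and ⟨c,w⟩ ≥ 0 for every codeword c ∈ C(G). -/
theorem stopping_set_without_codeword_all_bad {n m : ℕ} (G : TannerGraph n m)
    (S : Finset (Fin n)) (hSne : S.Nonempty) (hstop : IsStoppingSet G S)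
    (hnocw : ∀ c : Fin n → ZMod 2, IsCodeword G c → c ≠ 0 →
      ¬ (∀ i, c i ≠ 0 → i ∈ S)) :
    (IsPseudocodeword G (fun i => if i ∈ S then 2 else 0) ∧
      suppN (fun i => if i ∈ S then 2 else 0) = S) ∧
    (∀ p : Fin n → ℝ, (∀ i, 0 ≤ p i) → p ≠ 0 → suppF p = S → IsBad G p) :=  by
  constructor
  · constructor
    · -- pseudocodeword
      intro j
      by_cases hjS : (G.N j ∩ S).Nonempty
      · have h2 : 2 ≤ (G.N j ∩ S).card := hstop j hjS
        set T := G.N j ∩ S with hT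
        have hTN : T ⊆ G.N j := Finset.inter_subset_left
        by_cases hev : Even T.card
        · refine ⟨fun U => if U = T then 2 else 0, fun i hi => ?_⟩
          rw [Finset.sum_ite_eq' ((G.N j).powerset.filter (fun U => Even U.card ∧ i ∈ U)) T
            (fun _ => 2)]
          by_cases hiS : i ∈ S
          · have hiT : i ∈ T := Finset.mem_inter.mpr ⟨hi, hiS⟩
            have hm : T ∈ (G.N j).powerset.filter (fun U => Even U.card ∧ i ∈ U) := by
              simp [Finset.mem_filter, Finset.mem_powerset, hTN, hev, hiT]
            simp [hiS, hm]
          · have hiT : i ∉ T := fun h => hiS (Finset.mem_inter.mp h).2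
            have hm : T ∉ (G.N j).powerset.filter (fun U => Even U.card ∧ i ∈ U) := by
              simp [Finset.mem_filter, hiT]
            simp [hiS, hm]
        · -- odd card, pick two distinct elements
          obtain ⟨a, ha, b, hb, hab⟩ := Finset.one_lt_card.mp (by omega : 1 < T.card)
          refine ⟨fun U => (if U = T.erase a then 1 else 0) + (if U = T.erase b then 1 else 0)
            + (if U = ({a, b} : Finset (Fin n)) then 1 else 0), fun i hi => ?_⟩
          rw [Finset.sum_add_distrib, Finset.sum_add_distrib]
          rw [Finset.sum_ite_eq' _ (T.erase a) (fun _ => 1),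
              Finset.sum_ite_eq' _ (T.erase b) (fun _ => 1),
              Finset.sum_ite_eq' _ ({a, b} : Finset (Fin n)) (fun _ => 1)]
          have hevA : Even (T.erase a).card := by
            rw [Finset.card_erase_of_mem ha]
            rcases Nat.even_or_odd T.card with h | h
            · exact absurd h hev
            · obtain ⟨k, hk⟩ := h
              exact ⟨k, by omega⟩
          have hevB : Even (T.erase b).card := by
            rw [Finset.card_erase_of_mem hb]
            rcases Nat.even_or_odd T.card with h | h
            · exact absurd h hev
            · obtain ⟨k, hk⟩ := h
              exact ⟨k, by omega⟩
          have hevC : Even ({a, b} : Finset (Fin n)).card := by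
            rw [Finset.card_pair hab]; exact even_two
          have hsubA : T.erase a ⊆ G.N j := (Finset.erase_subset _ _).trans hTN
          have hsubB : T.erase b ⊆ G.N j := (Finset.erase_subset _ _).trans hTN
          have hsubC : ({a, b} : Finset (Fin n)) ⊆ G.N j := by
            intro x hx
            rcases Finset.mem_insert.mp hx with rfl | hx
            · exact hTN ha
            · exact hTN (Finset.mem_singleton.mp hx ▸ hb)
          have mA : (T.erase a ∈ (G.N j).powerset.filter (fun U => Even U.card ∧ i ∈ U))
              ↔ i ∈ T.erase a := by
            simp [Finset.mem_filter, Finset.mem_powerset, hsubA, hevA]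
          have mB : (T.erase b ∈ (G.N j).powerset.filter (fun U => Even U.card ∧ i ∈ U))
              ↔ i ∈ T.erase b := by
            simp [Finset.mem_filter, Finset.mem_powerset, hsubB, hevB]
          have mC : (({a, b} : Finset (Fin n)) ∈
              (G.N j).powerset.filter (fun U => Even U.card ∧ i ∈ U))
              ↔ i ∈ ({a, b} : Finset (Fin n)) := by
            simp [Finset.mem_filter, Finset.mem_powerset, hsubC, hevC]
          simp only [mA, mB, mC, apply_ite]
          by_cases hiS : i ∈ S
          · have hiT : i ∈ T := Finset.mem_inter.mpr ⟨hi, hiS⟩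
            by_cases hia : i = a
            · subst hia
              simp [Finset.mem_erase, hab, hiT, hiS]
            · by_cases hib : i = b
              · subst hib
                simp [Finset.mem_erase, Ne.symm hab, hiT, hiS, hab]
              · simp [Finset.mem_erase, hia, hib, hiT, hiS, Finset.mem_insert,
                  Finset.mem_singleton]
          · have hiT : i ∉ T := fun h => hiS (Finset.mem_inter.mp h).2
            have hia : i ≠ a := fun h => hiT (h ▸ ha)
            have hib : i ≠ b := fun h => hiT (h ▸ hb)
            simp [Finset.mem_erase, hiT, hiS, hia, hib, Finset.mem_insert,
              Finset.mem_singleton]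
      · -- check node not adjacent to S: take x = 0
        refine ⟨fun _ => 0, fun i hi => ?_⟩
        have hiS : i ∉ S := fun h => hjS ⟨i, Finset.mem_inter.mpr ⟨hi, h⟩⟩
        simp [hiS]
    · -- support
      ext i
      simp only [suppN, Finset.mem_filter, Finset.mem_univ, true_and]
      by_cases hiS : i ∈ S <;> simp [hiS]
  · -- every nonneg vector with support S is bad
    intro p hp0 hpne hsupp
    have hzero : ∀ i, i ∉ S → p i = 0 := by
      intro i hiS
      by_contra h
      exact hiS (hsupp ▸ (by simp [suppF, h] : i ∈ suppF p))
    refine ⟨fun i => if i ∈ S then -1 else (n : ℝ), ?_, ?_⟩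
    · -- negative cost for p
      have h1 : ∑ i, p i * (if i ∈ S then -1 else (n : ℝ))
          = ∑ i ∈ S, p i * (if i ∈ S then -1 else (n : ℝ)) := by
        refine (Finset.sum_subset (Finset.subset_univ S) ?_).symm
        intro i _ hiS
        simp [hzero i hiS]
      rw [h1]
      have h2 : ∑ i ∈ S, p i * (if i ∈ S then -1 else (n : ℝ)) = -∑ i ∈ S, p i := by
        rw [← Finset.sum_neg_distrib]
        refine Finset.sum_congr rfl fun i hi => ?_
        simp [hi]
      rw [h2, neg_neg_iff_pos]
      refine Finset.sum_pos' (fun i _ => hp0 i) ?_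
      obtain ⟨i0, hi0'⟩ := Function.ne_iff.mp hpne
      have hi0 : p i0 ≠ 0 := by simpa using hi0'
      have hi0S : i0 ∈ S := hsupp ▸ (by simp [suppF, hi0] : i0 ∈ suppF p)
      exact ⟨i0, hi0S, lt_of_le_of_ne (hp0 i0) (Ne.symm hi0)⟩
    · -- nonneg cost for codewords
      intro c hc
      by_cases hc0 : c = 0
      · simp [hc0]
      · obtain ⟨i0, hi0c, hi0S⟩ : ∃ i, c i ≠ 0 ∧ i ∉ S := by
          have h := hnocw c hc hc0
          push_neg at h
          exact h
        have hval1 : ∀ i, ((c i).val : ℝ) ≤ 1 := by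
          intro i
          have : (c i).val < 2 := (c i).val_lt
          exact_mod_cast Nat.lt_succ_iff.mp this
        have hval0 : ∀ i, (0 : ℝ) ≤ ((c i).val : ℝ) := fun i => by positivity
        rw [← Finset.sum_add_sum_compl S]
        have hA : -(S.card : ℝ) ≤ ∑ i ∈ S, ((c i).val : ℝ) * (if i ∈ S then -1 else (n : ℝ)) := by
          calc -(S.card : ℝ) = ∑ _i ∈ S, (-1 : ℝ) := by
                simp [Finset.sum_const]
            _ ≤ _ := by
                refine Finset.sum_le_sum fun i hi => ?_
                rw [if_pos hi, mul_neg_one]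
                linarith [hval1 i]
        have hB : (n : ℝ) ≤ ∑ i ∈ Sᶜ, ((c i).val : ℝ) * (if i ∈ S then -1 else (n : ℝ)) := by
          have hi0' : i0 ∈ Sᶜ := Finset.mem_compl.mpr hi0S
          have hterm : ((c i0).val : ℝ) * (if i0 ∈ S then -1 else (n : ℝ)) = (n : ℝ) := by
            have hv : (c i0).val = 1 := by
              have := (c i0).val_lt
              have hne : (c i0).val ≠ 0 := fun h => hi0c ((ZMod.val_eq_zero _).mp h)
              omega
            rw [if_neg hi0S, hv]
            norm_num
          calc (n : ℝ) = ((c i0).val : ℝ) * (if i0 ∈ S then -1 else (n : ℝ)) := hterm.symm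
            _ ≤ _ := by
                refine Finset.single_le_sum (f := fun i =>
                  ((c i).val : ℝ) * (if i ∈ S then -1 else (n : ℝ))) (fun i hi => ?_) hi0'
                rw [if_neg (Finset.mem_compl.mp hi)]
                positivity
        have hcard : (S.card : ℝ) ≤ (n : ℝ) := by
          have := Finset.card_le_univ S
          simp only [Finset.card_univ, Fintype.card_fin] at this
          exact_mod_cast this
        linarith
end
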